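/- arXiv:1604.08401 — 7 statements merged into one kernel-verified Lean document; each statement's English description precedes it below -/
import Mathlib

section
/- Let L be a finite semidistributive lattice, let x cover y in L, and define j = ⋀{z ∈ L : z ≤ x and z ≰ y}. Then j ∨ y = x; in particular j ≤ x and j ≰ y. -/
/-!
Every `z ≤ x` with `z ≰ y` satisfies `y ⊔ z = x`, because `x` covers `y`. Join-semidistributivity
says that the elements `z` with `y ⊔ z = x` are closed under binary meets, hence under finite
meets, so in a finite lattice their meet `j` also satisfies `y ⊔ j = x`.
-/

theorem CovBy.sup_eq_of_le_of_not_le {L : Type*} [Lattice L] {x y z : L} (hxy : y ⋖ x)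
    (hzx : z ≤ x) (hzy : ¬ z ≤ y) : y ⊔ z = x := by
  rcases hxy.eq_or_eq le_sup_left (sup_le hxy.le hzx) with h | h
  · exact absurd (h ▸ le_sup_right) hzy
  · exact h

theorem sup_inf'_eq_of_forall_sup_eq {L : Type*} [Lattice L]
    (hSDjoin : ∀ x y z : L, x ⊔ y = x ⊔ z → x ⊔ (y ⊓ z) = x ⊔ y)
    {x y : L} {s : Finset L} (hs : s.Nonempty) (h : ∀ z ∈ s, y ⊔ z = x) :
    y ⊔ s.inf' hs id = x := by
  induction hs using Finset.Nonempty.cons_induction with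
  | singleton a => simpa using h a (Finset.mem_singleton_self a)
  | cons a s ha hs ih =>
    have hya : y ⊔ a = x := h a (Finset.mem_cons_self a s)
    have hys : y ⊔ s.inf' hs id = x := ih fun z hz => h z (Finset.mem_cons_of_mem hz)
    rw [Finset.inf'_cons hs, id, hSDjoin y a _ (hya.trans hys.symm), hya]

theorem stmt1_general {L : Type*} [Lattice L] [Fintype L]
    (hSDjoin : ∀ x y z : L, x ⊔ y = x ⊔ z → x ⊔ (y ⊓ z) = x ⊔ y)
    (x y : L) (hxy : y ⋖ x)
    (j : L) (hj : IsGLB {z : L | z ≤ x ∧ ¬ z ≤ y} j) :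
    j ⊔ y = x ∧ j ≤ x ∧ ¬ j ≤ y := by
  classical
  have hS : {z : L | z ≤ x ∧ ¬ z ≤ y}.toFinset.Nonempty :=
    ⟨x, Set.mem_toFinset.2 ⟨le_rfl, hxy.lt.not_ge⟩⟩
  have hjoin : y ⊔ j = x := by
    rw [hj.unique (Set.coe_toFinset {z : L | z ≤ x ∧ ¬ z ≤ y} ▸ Finset.isGLB_inf' hS)]
    refine sup_inf'_eq_of_forall_sup_eq hSDjoin hS fun z hz => ?_
    obtain ⟨hzx, hzy⟩ := Set.mem_toFinset.1 hz
    exact hxy.sup_eq_of_le_of_not_le hzx hzy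
  rw [sup_comm] at hjoin
  refine ⟨hjoin, hjoin ▸ le_sup_left, fun hjy => hxy.lt.ne ?_⟩
  rwa [sup_eq_right.2 hjy] at hjoin

/-- Let `L` be a finite semidistributive lattice, let `x` cover `y` in `L`,
and let `j` be the meet of the set `{z : z ≤ x and z ≰ y}` (which is well defined
since the lattice is finite).  Then `j ⊔ y = x`; in particular `j ≤ x` and `j ≰ y`. -/
theorem stmt1 {L : Type*} [Lattice L] [Fintype L]
    (hSDjoin : ∀ x y z : L, x ⊔ y = x ⊔ z → x ⊔ (y ⊓ z) = x ⊔ y)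
    (hSDmeet : ∀ x y z : L, x ⊓ y = x ⊓ z → x ⊓ (y ⊔ z) = x ⊓ y)
    (x y : L) (hxy : y ⋖ x)
    (j : L) (hj : IsGLB {z : L | z ≤ x ∧ ¬ z ≤ y} j) :
    j ⊔ y = x ∧ j ≤ x ∧ ¬ j ≤ y :=
  stmt1_general hSDjoin x y hxy j hj
end

section
/- Let L be a finite lattice in which every element has a canonical join representation, let x cover y, and suppose the canonical join representation of x is x = ⋁ J. Then there exists exactly one j ∈ J with j ≰ y. -/
/-!
Since `⋁ J = x > y`, some `j ∈ J` lies outside `↓y`. For any such `j`, the cover `y ⋖ x` forces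
`y ⊔ j = x`, so `{y, j}` is a join representation of `x`; refinement then puts every other
`j' ∈ J` with `j' ≰ y` below `j`. Two such elements are thus below each other, hence equal.
-/

/-- `x = ⋁ S` is the *canonical join representation* of `x`:  `S` joins to `x`,
no proper subset of `S` joins to `x`, and every join representation `x = ⋁ T`
refines `S`, i.e. for all `s ∈ S` there is `t ∈ T` with `s ≤ t`. -/
def IsCanonicalJoinRep {L : Type*} [Lattice L] [OrderBot L] (x : L) (S : Finset L) : Prop :=
  S.sup id = x ∧
  (∀ S' : Finset L, S' ⊂ S → S'.sup id ≠ x) ∧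
  (∀ T : Finset L, T.sup id = x → ∀ s ∈ S, ∃ t ∈ T, s ≤ t)

theorem CovBy.sup_eq_of_not_le {L : Type*} [Lattice L] {x y b : L} (hxy : y ⋖ x)
    (hbx : b ≤ x) (hby : ¬ b ≤ y) : y ⊔ b = x :=
  (hxy.eq_or_eq le_sup_left (sup_le hxy.le hbx)).resolve_left (left_lt_sup.2 hby).ne'

namespace IsCanonicalJoinRep

variable {L : Type*} [Lattice L] [OrderBot L] {x y : L} {S : Finset L}

theorem le (h : IsCanonicalJoinRep x S) {s : L} (hs : s ∈ S) : s ≤ x :=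
  h.1 ▸ Finset.le_sup (f := id) hs

theorem exists_mem_not_le (h : IsCanonicalJoinRep x S) (hxy : ¬ x ≤ y) : ∃ s ∈ S, ¬ s ≤ y := by
  by_contra! hS
  exact hxy (h.1 ▸ Finset.sup_le hS)

theorem le_of_sup_eq (h : IsCanonicalJoinRep x S) {b : L} (hyb : y ⊔ b = x) {s : L}
    (hs : s ∈ S) (hsy : ¬ s ≤ y) : s ≤ b := by
  classical
  obtain ⟨t, ht, hst⟩ := h.2.2 {y, b} (by simpa using hyb) s hs
  rcases Finset.mem_insert.1 ht with rfl | ht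
  · exact absurd hst hsy
  · exact Finset.mem_singleton.1 ht ▸ hst

theorem le_of_covBy (h : IsCanonicalJoinRep x S) (hxy : y ⋖ x) {b c : L} (hb : b ∈ S)
    (hby : ¬ b ≤ y) (hc : c ∈ S) (hcy : ¬ c ≤ y) : c ≤ b :=
  h.le_of_sup_eq (hxy.sup_eq_of_not_le (h.le hb) hby) hc hcy

end IsCanonicalJoinRep

theorem stmt5_general {L : Type*} [Lattice L] [OrderBot L]
    (x y : L) (hxy : y ⋖ x)
    (J : Finset L) (hJ : IsCanonicalJoinRep x J) :
    ∃! j : L, j ∈ J ∧ ¬ j ≤ y := by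
  obtain ⟨a, haJ, hay⟩ := hJ.exists_mem_not_le hxy.lt.not_ge
  refine ⟨a, ⟨haJ, hay⟩, fun b ⟨hbJ, hby⟩ => ?_⟩
  exact (hJ.le_of_covBy hxy haJ hay hbJ hby).antisymm (hJ.le_of_covBy hxy hbJ hby haJ hay)

/-- Let `L` be a finite lattice in which every element has a canonical join
representation, let `x` cover `y`, and suppose `x = ⋁ J` is the canonical join
representation of `x`.  Then there is exactly one `j ∈ J` with `j ≰ y`. -/
theorem stmt5 {L : Type*} [Lattice L] [OrderBot L] [Fintype L]
    (hall : ∀ z : L, ∃ S : Finset L, IsCanonicalJoinRep z S)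
    (x y : L) (hxy : y ⋖ x)
    (J : Finset L) (hJ : IsCanonicalJoinRep x J) :
    ∃! j : L, j ∈ J ∧ ¬ j ≤ y :=
  stmt5_general x y hxy J hJ
end

section
/- The number of join-irreducible elements of the weak order on the symmetric group S_{n+1} equals 2^{n+1} − n − 2. -/
/-
The lower covers of `w` in the weak order are exactly the `w sᵢ` with `sᵢ = (i i+1)` and `i` a
descent of `w`, so the join-irreducible permutations are those with exactly one descent. Such a
permutation is determined by the set `S` of its first values: its one-line notation lists `S` and
then `Sᶜ`, each increasingly (a Grassmannian permutation). The sets `S` that arise are exactly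
those that are not initial segments of `{0, …, n}`, and there are `2^(n+1) - (n+2)` of them.
-/

namespace Stmt7

variable {n : ℕ}

/-- The Coxeter length of a permutation: its number of inversions. -/
noncomputable def len (w : Equiv.Perm (Fin (n + 1))) : ℕ :=
  Nat.card {p : Fin (n + 1) × Fin (n + 1) // p.1 < p.2 ∧ w p.2 < w p.1}

/-- The right weak order on the symmetric group: `u ≤ v` iff `ℓ(u) + ℓ(u⁻¹v) = ℓ(v)`. -/
noncomputable def wle (u v : Equiv.Perm (Fin (n + 1))) : Prop :=
  len u + len (u⁻¹ * v) = len v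

/-- `y` is covered by `x` in the weak order. -/
noncomputable def wcov (y x : Equiv.Perm (Fin (n + 1))) : Prop :=
  wle y x ∧ y ≠ x ∧ ∀ z, wle y z → wle z x → z = y ∨ z = x

/-- `x` is join-irreducible for the weak order: not the minimum and covering exactly one
element. -/
noncomputable def JoinIrr (x : Equiv.Perm (Fin (n + 1))) : Prop :=
  x ≠ 1 ∧ ∃! y, wcov y x

open Equiv Finset

lemma strictMonoOn_of_castSucc_lt_succ {α : Type*} [Preorder α] {f : Fin (n + 1) → α}
    {s : Set (Fin (n + 1))} (hs : s.OrdConnected)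
    (h : ∀ i : Fin n, i.castSucc ∈ s → i.succ ∈ s → f i.castSucc < f i.succ) :
    StrictMonoOn f s := by
  refine strictMonoOn_of_lt_succ hs fun a ha has hsa => ?_
  obtain ⟨i, rfl⟩ := Fin.eq_castSucc_of_ne_last (x := a) fun h' => ha (by
    rw [h', ← Fin.top_eq_last]
    exact isMax_top)
  rw [Fin.orderSucc_castSucc] at hsa ⊢
  exact h i has hsa

lemma card_compl_fin {m : ℕ} (S : Finset (Fin m)) : #Sᶜ = m - #S := by
  rw [card_compl, Fintype.card_fin]

lemma mem_iff_val_lt_card_of_isLowerSet {m : ℕ} {S : Finset (Fin m)}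
    (hS : IsLowerSet (S : Set (Fin m))) (a : Fin m) : a ∈ S ↔ a.val < #S := by
  simpa using (Fin.lt_card_filter_univ_iff_apply_of_imp (j := a) (· ∈ S)
    fun i j hji hi => hS hji hi).symm

lemma card_isLowerSet (m : ℕ) :
    Nat.card {S : Finset (Fin m) // IsLowerSet (S : Set (Fin m))} = m + 1 := by
  classical
  have hcard (S : Finset (Fin m)) : #S < m + 1 := Nat.lt_succ_of_le (by simpa using card_le_univ S)
  refine (Nat.card_eq_of_bijective (fun S => (⟨#S.1, hcard S.1⟩ : Fin (m + 1)))
    ⟨fun S T h => Subtype.ext ?_, fun k => ?_⟩).trans (Nat.card_fin _)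
  · ext a
    rw [mem_iff_val_lt_card_of_isLowerSet S.2, mem_iff_val_lt_card_of_isLowerSet T.2,
      Fin.mk.inj h]
  · refine ⟨⟨univ.filter (·.val < k.val), fun a b hba ha => ?_⟩, Fin.ext ?_⟩
    · simp only [coe_filter, mem_univ, true_and, Set.mem_ofPred_eq] at ha ⊢
      exact (Fin.le_def.1 hba).trans_lt ha
    · simp [Fin.card_filter_val_lt]
      omega

lemma card_not_isLowerSet (m : ℕ) :
    Nat.card {S : Finset (Fin m) // ¬IsLowerSet (S : Set (Fin m))} = 2 ^ m - (m + 1) := by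
  classical
  rw [← card_isLowerSet, Nat.card_eq_fintype_card, Nat.card_eq_fintype_card,
    Fintype.card_subtype_compl, Fintype.card_finset, Fintype.card_fin]

def inversions (w : Perm (Fin (n + 1))) : Finset (Fin (n + 1) × Fin (n + 1)) :=
  univ.filter fun p => p.1 < p.2 ∧ w p.2 < w p.1

lemma mem_inversions {w : Perm (Fin (n + 1))} {p : Fin (n + 1) × Fin (n + 1)} :
    p ∈ inversions w ↔ p.1 < p.2 ∧ w p.2 < w p.1 := by
  simp [inversions]

lemma len_eq_card_inversions (w : Perm (Fin (n + 1))) : len w = #(inversions w) := by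
  rw [len, Nat.card_eq_fintype_card, Fintype.card_subtype]
  rfl

def adjSwap (i : Fin n) : Perm (Fin (n + 1)) := swap i.castSucc i.succ

section adjSwap

variable (i : Fin n)

@[simp] lemma adjSwap_castSucc : adjSwap i i.castSucc = i.succ := swap_apply_left _ _
@[simp] lemma adjSwap_succ : adjSwap i i.succ = i.castSucc := swap_apply_right _ _
@[simp] lemma adjSwap_adjSwap (a : Fin (n + 1)) : adjSwap i (adjSwap i a) = a :=
  swap_apply_self _ _ _
@[simp] lemma adjSwap_symm : (adjSwap i).symm = adjSwap i := symm_swap _ _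
@[simp] lemma adjSwap_inv : (adjSwap i)⁻¹ = adjSwap i := swap_inv _ _
@[simp] lemma adjSwap_mul_self : adjSwap i * adjSwap i = 1 := swap_mul_self _ _

end adjSwap

lemma adjSwap_lt_adjSwap {i : Fin n} {a b : Fin (n + 1)} (hab : a < b)
    (hne : (a, b) ≠ (i.castSucc, i.succ)) : adjSwap i a < adjSwap i b := by
  simp only [adjSwap, swap_apply_def, Ne, Prod.mk.injEq, Fin.ext_iff, Fin.lt_def] at *
  split_ifs <;> simp only [Fin.val_castSucc, Fin.val_succ] at * <;> omega

lemma len_mul_adjSwap_of_lt {w : Perm (Fin (n + 1))} {i : Fin n}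
    (h : w i.castSucc < w i.succ) : len (w * adjSwap i) = len w + 1 := by
  have key : inversions (w * adjSwap i) = insert (i.castSucc, i.succ)
      ((inversions w).map ((adjSwap i).prodCongr (adjSwap i)).toEmbedding) := by
    ext ⟨a, b⟩
    simp only [mem_insert, mem_map_equiv, mem_inversions, prodCongr_symm, prodCongr_apply,
      Prod.map, adjSwap_symm, Perm.mul_apply, Prod.mk.injEq]
    constructor
    · rintro ⟨hab, hw⟩
      by_cases hp : (a, b) = (i.castSucc, i.succ)
      · exact Or.inl (Prod.mk.inj hp)
      · exact Or.inr ⟨adjSwap_lt_adjSwap hab hp, hw⟩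
    · rintro (⟨rfl, rfl⟩ | ⟨hab, hw⟩)
      · exact ⟨Fin.castSucc_lt_succ, by simpa using h⟩
      · refine ⟨?_, hw⟩
        have hp : (adjSwap i a, adjSwap i b) ≠ (i.castSucc, i.succ) := by
          intro hp
          rw [Prod.mk.injEq] at hp
          rw [hp.1, hp.2] at hw
          exact h.not_gt hw
        simpa using adjSwap_lt_adjSwap hab hp
  have hnot : (i.castSucc, i.succ) ∉
      (inversions w).map ((adjSwap i).prodCongr (adjSwap i)).toEmbedding := by
    simp [mem_map_equiv, mem_inversions, Fin.castSucc_lt_succ.not_gt]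
  rw [len_eq_card_inversions, len_eq_card_inversions, key, card_insert_of_notMem hnot, card_map]

lemma len_mul_adjSwap_of_gt {w : Perm (Fin (n + 1))} {i : Fin n}
    (h : w i.succ < w i.castSucc) : len (w * adjSwap i) + 1 = len w := by
  have := len_mul_adjSwap_of_lt (w := w * adjSwap i) (i := i) (by simpa using h)
  simpa [mul_assoc] using this.symm

lemma len_one : len (1 : Perm (Fin (n + 1))) = 0 := by
  rw [len_eq_card_inversions, card_eq_zero, inversions, filter_eq_empty_iff]
  exact fun _ _ h => h.1.not_gt h.2

lemma len_adjSwap (i : Fin n) : len (adjSwap i) = 1 := by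
  simpa [len_one] using len_mul_adjSwap_of_lt (w := 1) (i := i) (by simp)

lemma len_mul_le (u v : Perm (Fin (n + 1))) : len (u * v) ≤ len u + len v := by
  have hsub : inversions (u * v) ⊆
      inversions v ∪ (inversions u).map (v.symm.prodCongr v.symm).toEmbedding := by
    rintro ⟨a, b⟩ hab
    simp only [mem_inversions, Perm.mul_apply] at hab
    simp only [mem_union, mem_map_equiv, mem_inversions, prodCongr_symm, symm_symm,
      prodCongr_apply, Prod.map]
    by_cases hv : v b < v a
    · exact Or.inl ⟨hab.1, hv⟩
    · exact Or.inr ⟨(not_lt.1 hv).lt_of_ne (v.injective.ne hab.1.ne), hab.2⟩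
  simp only [len_eq_card_inversions]
  calc #(inversions (u * v)) ≤ #(inversions v) + #((inversions u).map _) :=
        (card_le_card hsub).trans (card_union_le _ _)
    _ = #(inversions u) + #(inversions v) := by rw [card_map, add_comm]

lemma exists_descent_of_ne_one {w : Perm (Fin (n + 1))} (hw : w ≠ 1) :
    ∃ i : Fin n, w i.succ < w i.castSucc := by
  by_contra! hasc
  have hmono : StrictMono w := Fin.strictMono_iff_lt_succ.2 fun i =>
    (hasc i).lt_of_ne (w.injective.ne Fin.castSucc_lt_succ.ne)
  exact hw (Equiv.ext (congrFun hmono.eq_id))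

lemma len_eq_zero_iff {w : Perm (Fin (n + 1))} : len w = 0 ↔ w = 1 := by
  refine ⟨fun h => ?_, fun h => h ▸ len_one⟩
  by_contra hw
  obtain ⟨i, hi⟩ := exists_descent_of_ne_one hw
  have : (i.castSucc, i.succ) ∈ inversions w := mem_inversions.2 ⟨Fin.castSucc_lt_succ, hi⟩
  rw [len_eq_card_inversions, card_eq_zero] at h
  simp [h] at this

lemma len_le_len_mul_adjSwap_add_one (w : Perm (Fin (n + 1))) (i : Fin n) :
    len w ≤ len (w * adjSwap i) + 1 := by
  simpa [mul_assoc, len_adjSwap] using len_mul_le (w * adjSwap i) (adjSwap i)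

lemma descent_iff_len_mul_adjSwap_lt {w : Perm (Fin (n + 1))} {i : Fin n} :
    w i.succ < w i.castSucc ↔ len (w * adjSwap i) < len w := by
  refine ⟨fun h => by have := len_mul_adjSwap_of_gt h; omega, fun h => ?_⟩
  by_contra hasc
  have := len_mul_adjSwap_of_lt ((not_lt.1 hasc).lt_of_ne (w.injective.ne Fin.castSucc_lt_succ.ne))
  omega

lemma eq_of_wle_of_len_le {u v : Perm (Fin (n + 1))} (h : wle u v) (hlen : len v ≤ len u) :
    u = v := by
  unfold wle at h
  exact inv_mul_eq_one.1 (len_eq_zero_iff.1 (by omega))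

lemma len_le_of_wle {u v : Perm (Fin (n + 1))} (h : wle u v) : len u ≤ len v := by
  unfold wle at h
  omega

lemma wle_mul_adjSwap {w : Perm (Fin (n + 1))} {i : Fin n} (h : w i.succ < w i.castSucc) :
    wle (w * adjSwap i) w := by
  unfold wle
  simpa [mul_assoc, len_adjSwap] using len_mul_adjSwap_of_gt h

lemma exists_wle_mul_adjSwap {x y : Perm (Fin (n + 1))} (h : wle y x) (hne : y ≠ x) :
    ∃ i : Fin n, x i.succ < x i.castSucc ∧ wle y (x * adjSwap i) := by
  obtain ⟨i, hi⟩ := exists_descent_of_ne_one (mt inv_mul_eq_one.1 hne)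
  have hdrop := len_mul_adjSwap_of_gt hi
  have hsub := len_mul_le y (y⁻¹ * x * adjSwap i)
  have hup := len_le_len_mul_adjSwap_add_one x i
  rw [← mul_assoc, mul_inv_cancel_left] at hsub
  unfold wle at h ⊢
  refine ⟨i, descent_iff_len_mul_adjSwap_lt.2 (by omega), ?_⟩
  rw [← mul_assoc]
  omega

lemma wcov_iff {x y : Perm (Fin (n + 1))} :
    wcov y x ↔ ∃ i : Fin n, x i.succ < x i.castSucc ∧ y = x * adjSwap i := by
  constructor
  · rintro ⟨hyx, hne, hbetween⟩
    obtain ⟨i, hi, hyz⟩ := exists_wle_mul_adjSwap hyx hne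
    refine ⟨i, hi, ?_⟩
    rcases hbetween _ hyz (wle_mul_adjSwap hi) with h | h
    · exact h.symm
    · exact absurd (h ▸ descent_iff_len_mul_adjSwap_lt.1 hi) (lt_irrefl _)
  · rintro ⟨i, hi, rfl⟩
    have hdrop := len_mul_adjSwap_of_gt hi
    refine ⟨wle_mul_adjSwap hi, fun h => by rw [h] at hdrop; omega, fun z h₁ h₂ => ?_⟩
    have l₁ := len_le_of_wle h₁
    have l₂ := len_le_of_wle h₂
    rcases (by omega : len z ≤ len (x * adjSwap i) ∨ len x ≤ len z) with h | h
    · exact Or.inl (eq_of_wle_of_len_le h₁ h).symm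
    · exact Or.inr (eq_of_wle_of_len_le h₂ h)

def descents (w : Perm (Fin (n + 1))) : Finset (Fin n) :=
  univ.filter fun i => w i.succ < w i.castSucc

lemma mem_descents {w : Perm (Fin (n + 1))} {i : Fin n} :
    i ∈ descents w ↔ w i.succ < w i.castSucc := by
  simp [descents]

lemma castSucc_lt_succ_of_notMem_descents {x : Perm (Fin (n + 1))} {i : Fin n}
    (hi : i ∉ descents x) : x i.castSucc < x i.succ :=
  (not_lt.1 (mt mem_descents.2 hi)).lt_of_ne (x.injective.ne Fin.castSucc_lt_succ.ne)

lemma adjSwap_injective : Function.Injective (adjSwap (n := n)) := by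
  intro i j h
  have := congrArg (· i.castSucc) h
  simp only [adjSwap, swap_apply_def, Fin.ext_iff] at this
  split_ifs at this <;> simp only [Fin.val_castSucc, Fin.val_succ] at * <;> omega

lemma joinIrr_iff_exists_descents_eq {x : Perm (Fin (n + 1))} :
    JoinIrr x ↔ ∃ i, descents x = {i} := by
  constructor
  · rintro ⟨-, y, hy, huniq⟩
    obtain ⟨i, hi, rfl⟩ := wcov_iff.1 hy
    refine ⟨i, eq_singleton_iff_unique_mem.2 ⟨mem_descents.2 hi, fun j hj => ?_⟩⟩
    exact adjSwap_injective (mul_left_cancel (huniq _ (wcov_iff.2 ⟨j, mem_descents.1 hj, rfl⟩)))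
  · rintro ⟨i, hi⟩
    have hdes : x i.succ < x i.castSucc := mem_descents.1 (hi ▸ mem_singleton_self i)
    refine ⟨?_, x * adjSwap i, wcov_iff.2 ⟨i, hdes, rfl⟩, fun y hy => ?_⟩
    · rintro rfl
      exact Fin.castSucc_lt_succ.not_gt hdes
    · obtain ⟨j, hj, rfl⟩ := wcov_iff.1 hy
      have hji : j ∈ descents x := mem_descents.2 hj
      rw [hi, mem_singleton] at hji
      rw [hji]

noncomputable def grassmannianFun (S : Finset (Fin (n + 1))) (p : Fin (n + 1)) : Fin (n + 1) :=
  if h : p.val < #S then S.orderEmbOfFin rfl ⟨p, h⟩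
  else Sᶜ.orderEmbOfFin (card_compl_fin S) ⟨p - #S, by omega⟩

lemma grassmannianFun_injective (S : Finset (Fin (n + 1))) :
    Function.Injective (grassmannianFun S) := by
  intro p q h
  unfold grassmannianFun at h
  split_ifs at h with hp hq hq
  · simpa [Fin.ext_iff] using h
  · have hmem := orderEmbOfFin_mem S rfl ⟨p, hp⟩
    rw [h] at hmem
    exact (mem_compl.1 (orderEmbOfFin_mem _ _ _) hmem).elim
  · have hmem := orderEmbOfFin_mem S rfl ⟨q, hq⟩
    rw [← h] at hmem
    exact (mem_compl.1 (orderEmbOfFin_mem _ _ _) hmem).elim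
  · simp only [OrderEmbedding.eq_iff_eq, Fin.mk.injEq] at h
    omega

noncomputable def grassmannian (S : Finset (Fin (n + 1))) : Perm (Fin (n + 1)) :=
  Equiv.ofBijective _ (Finite.injective_iff_bijective.1 (grassmannianFun_injective S))

section grassmannian

variable {S : Finset (Fin (n + 1))} {p : Fin (n + 1)}

lemma grassmannian_apply_of_lt (h : p.val < #S) :
    grassmannian S p = S.orderEmbOfFin rfl ⟨p, h⟩ :=
  dif_pos h

lemma grassmannian_apply_of_le (h : #S ≤ p.val) :
    grassmannian S p = Sᶜ.orderEmbOfFin (card_compl_fin S) ⟨p - #S, by omega⟩ :=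
  dif_neg h.not_gt

lemma grassmannian_mem_iff : grassmannian S p ∈ S ↔ p.val < #S := by
  by_cases h : p.val < #S
  · simp [h, grassmannian_apply_of_lt h]
  · rw [grassmannian_apply_of_le (not_lt.1 h)]
    simpa [h] using mem_compl.1 (orderEmbOfFin_mem _ _ _)

lemma strictMonoOn_grassmannian_lt : StrictMonoOn (grassmannian S) {p | p.val < #S} := by
  intro p hp q hq hpq
  rw [grassmannian_apply_of_lt hp, grassmannian_apply_of_lt hq]
  exact (S.orderEmbOfFin rfl).strictMono hpq

lemma strictMonoOn_grassmannian_le : StrictMonoOn (grassmannian S) {p | #S ≤ p.val} := by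
  intro p (hp : #S ≤ p.val) q (hq : #S ≤ q.val) hpq
  rw [grassmannian_apply_of_le hp, grassmannian_apply_of_le hq]
  exact (Sᶜ.orderEmbOfFin _).strictMono (Fin.mk_lt_mk.2 (by omega))

lemma grassmannian_castSucc_lt_succ {i : Fin n} (hi : i.val + 1 ≠ #S) :
    grassmannian S i.castSucc < grassmannian S i.succ := by
  rcases lt_or_gt_of_ne hi with h | h
  · exact strictMonoOn_grassmannian_lt (show i.val < #S by omega) (show i.val + 1 < #S from h)
      Fin.castSucc_lt_succ
  · exact strictMonoOn_grassmannian_le (show #S ≤ i.val by omega)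
      (show #S ≤ i.val + 1 by omega) Fin.castSucc_lt_succ

lemma grassmannian_succ_lt_castSucc (hS : ¬IsLowerSet (S : Set (Fin (n + 1)))) {i : Fin n}
    (hi : i.val + 1 = #S) : grassmannian S i.succ < grassmannian S i.castSucc := by
  simp only [IsLowerSet, not_forall, mem_coe] at hS
  obtain ⟨a, b, hba, ha, hb⟩ := hS
  obtain ⟨p, rfl⟩ := (grassmannian S).surjective a
  obtain ⟨q, rfl⟩ := (grassmannian S).surjective b
  rw [grassmannian_mem_iff] at ha hb
  calc grassmannian S i.succ ≤ grassmannian S q :=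
        strictMonoOn_grassmannian_le.monotoneOn (show #S ≤ i.val + 1 by omega) (not_lt.1 hb)
          (show i.val + 1 ≤ q.val by omega)
    _ < grassmannian S p := hba.lt_of_ne (fun h => by
      rw [(grassmannian S).injective h] at hb
      exact hb ha)
    _ ≤ grassmannian S i.castSucc :=
        strictMonoOn_grassmannian_lt.monotoneOn ha (show i.val < #S by omega)
          (show p.val ≤ i.val by omega)

lemma descents_grassmannian (hS : ¬IsLowerSet (S : Set (Fin (n + 1)))) :
    ∃ i : Fin n, i.val + 1 = #S ∧ descents (grassmannian S) = {i} := by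
  have hpos : 0 < #S :=
    card_pos.2 (nonempty_iff_ne_empty.2 fun h => hS (by simp [h, isLowerSet_empty]))
  have hlt : #S < n + 1 := by
    simpa using (card_lt_iff_ne_univ S).2 fun h => hS (by simp [h, isLowerSet_univ])
  refine ⟨⟨#S - 1, by omega⟩, show #S - 1 + 1 = #S by omega, ?_⟩
  ext j
  rw [mem_descents, mem_singleton]
  constructor
  · intro hj
    by_contra hne
    have hj' : j.val + 1 ≠ #S := fun h => hne (Fin.ext (show j.val = #S - 1 by omega))
    exact (grassmannian_castSucc_lt_succ hj').not_gt hj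
  · rintro rfl
    exact grassmannian_succ_lt_castSucc hS (show #S - 1 + 1 = #S by omega)

end grassmannian

lemma eq_grassmannian_of_strictMonoOn {x : Perm (Fin (n + 1))} {S : Finset (Fin (n + 1))}
    (hmem : ∀ p, x p ∈ S ↔ p.val < #S) (hlow : StrictMonoOn x {p | p.val < #S})
    (hhigh : StrictMonoOn x {p | #S ≤ p.val}) : x = grassmannian S := by
  have hcard : #S ≤ n + 1 := by simpa using card_le_univ S
  have hS : (fun j : Fin #S => x ⟨j, by omega⟩) = S.orderEmbOfFin rfl :=
    orderEmbOfFin_unique rfl (fun j => (hmem _).2 j.isLt)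
      fun j k hjk => hlow j.isLt k.isLt hjk
  have hSc : (fun j : Fin (n + 1 - #S) => x ⟨#S + j, by omega⟩) =
      Sᶜ.orderEmbOfFin (card_compl_fin S) :=
    orderEmbOfFin_unique _ (fun j => mem_compl.2 fun h => by simpa using (hmem _).1 h)
      fun j k hjk => hhigh (Nat.le_add_right _ _) (Nat.le_add_right _ _)
        (Nat.add_lt_add_left hjk _)
  ext p
  by_cases hp : p.val < #S
  · rw [grassmannian_apply_of_lt hp, ← hS]
  · rw [grassmannian_apply_of_le (not_lt.1 hp), ← hSc]
    exact congrArg (fun q => (x q).val) (Fin.ext (show p.val = #S + (p.val - #S) by omega))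

lemma exists_eq_grassmannian {x : Perm (Fin (n + 1))} {l : Fin n} (hx : descents x = {l}) :
    ∃ S : Finset (Fin (n + 1)), ¬IsLowerSet (S : Set (Fin (n + 1))) ∧ x = grassmannian S := by
  set S := (Iic l.castSucc).map x.toEmbedding
  have hcard : #S = l.val + 1 := by simp [S]
  have hmem : ∀ p, x p ∈ S ↔ p.val < #S := by
    intro p
    simp [S, hcard, Fin.le_def]
  have hasc : ∀ i, i ≠ l → x i.castSucc < x i.succ := fun i hi =>
    castSucc_lt_succ_of_notMem_descents (by rw [hx, mem_singleton]; exact hi)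
  refine ⟨S, fun hlow => ?_, eq_grassmannian_of_strictMonoOn hmem ?_ ?_⟩
  · have hl : x l.succ < x l.castSucc := mem_descents.1 (by rw [hx]; exact mem_singleton_self l)
    have := (hmem _).1 (hlow hl.le ((hmem _).2 (by simp [hcard])))
    simp [hcard] at this
  · refine strictMonoOn_of_castSucc_lt_succ ?_ fun i _ hi => hasc i ?_
    · exact IsLowerSet.ordConnected fun a b hba (ha : a.val < #S) => (Fin.le_def.1 hba).trans_lt ha
    · rintro rfl
      simp [hcard] at hi
  · refine strictMonoOn_of_castSucc_lt_succ ?_ fun i hi _ => hasc i ?_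
    · exact IsUpperSet.ordConnected fun a b hab (ha : #S ≤ a.val) => ha.trans (Fin.le_def.1 hab)
    · rintro rfl
      simp [hcard] at hi

lemma joinIrr_grassmannian {S : Finset (Fin (n + 1))} (hS : ¬IsLowerSet (S : Set (Fin (n + 1)))) :
    JoinIrr (grassmannian S) := by
  obtain ⟨i, -, hi⟩ := descents_grassmannian hS
  exact joinIrr_iff_exists_descents_eq.2 ⟨i, hi⟩

lemma grassmannian_injOn :
    Set.InjOn (grassmannian (n := n)) {S | ¬IsLowerSet (S : Set (Fin (n + 1)))} := by
  intro S hS T hT h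
  obtain ⟨i, hiS, hdS⟩ := descents_grassmannian hS
  obtain ⟨j, hjT, hdT⟩ := descents_grassmannian hT
  rw [h, hdT, singleton_inj] at hdS
  have hcard : #S = #T := by rw [← hiS, ← hjT, hdS]
  ext a
  obtain ⟨p, rfl⟩ := (grassmannian T).surjective a
  rw [grassmannian_mem_iff, ← h, grassmannian_mem_iff, hcard]

lemma card_joinIrr :
    Nat.card {w : Perm (Fin (n + 1)) // JoinIrr w} =
      Nat.card {S : Finset (Fin (n + 1)) // ¬IsLowerSet (S : Set (Fin (n + 1)))} := by
  refine (Nat.card_eq_of_bijective (fun S => ⟨grassmannian S.1, joinIrr_grassmannian S.2⟩)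
    ⟨fun S T h => Subtype.ext (grassmannian_injOn S.2 T.2 (congrArg Subtype.val h)),
      fun w => ?_⟩).symm
  obtain ⟨l, hl⟩ := joinIrr_iff_exists_descents_eq.1 w.2
  obtain ⟨S, hS, hw⟩ := exists_eq_grassmannian hl
  exact ⟨⟨S, hS⟩, Subtype.ext hw.symm⟩

/-- The number of join-irreducible elements of the weak order on the symmetric
group `S_{n+1}` equals `2^{n+1} − n − 2`. -/
theorem stmt7 (n : ℕ) :
    Nat.card {w : Equiv.Perm (Fin (n + 1)) // JoinIrr w} = 2 ^ (n + 1) - n - 2 := by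
  rw [card_joinIrr, card_not_isLowerSet, Nat.sub_sub]

end Stmt7
end

section
/- Let A be a finite dimensional algebra over a field k and let S be a brick in mod A, i.e., End_A(S) is a division ring. Then Filt(S), the full subcategory of modules admitting a finite filtration with all subquotients isomorphic to S, is a wide subcategory of mod A (closed under kernels, cokernels, and extensions), and S is, up to isomorphism, the unique simple object of the abelian category Filt(S). -/
universe u

namespace Stmt9

variable (A : Type u) [Ring A]

/-- `S` is a brick: its endomorphism ring is a division ring, i.e. `S ≠ 0` and every
nonzero endomorphism is invertible. -/
def IsBrick (S : Type u) [AddCommGroup S] [Module A S] : Prop :=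
  Nontrivial S ∧ ∀ f : S →ₗ[A] S, f = 0 ∨ Function.Bijective f

/-- `M ∈ Filt(S)`: `M` has a finite filtration by submodules all of whose subquotients are
isomorphic to `S`. -/
def MemFilt (S : Type u) [AddCommGroup S] [Module A S]
    (M : Type u) [AddCommGroup M] [Module A M] : Prop :=
  ∃ (m : ℕ) (c : Fin (m + 1) → Submodule A M), Monotone c ∧ c 0 = ⊥ ∧ c (Fin.last m) = ⊤ ∧
    ∀ i : Fin m,
      Nonempty ((↥(c i.succ) ⧸ (c i.castSucc).comap (c i.succ).subtype) ≃ₗ[A] S)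

/-- `M` is a simple object of the subcategory `Filt(S)`: `M ∈ Filt(S)`, `M ≠ 0`, and the
only subobjects of `M` lying in `Filt(S)` are `0` and `M`. -/
def SimpleInFilt (S : Type u) [AddCommGroup S] [Module A S]
    (M : Type u) [AddCommGroup M] [Module A M] : Prop :=
  MemFilt A S M ∧ Nontrivial M ∧
    ∀ N : Submodule A M, MemFilt A S ↥N → N = ⊥ ∨ N = ⊤

/-!
Everything is proved by induction on the length of an `S`-filtration, peeling off the bottom
copy of `S`. The key fact is that a nonzero map `g` from `S` into some `X ∈ Filt(S)` is injective
with cokernel in `Filt(S)`: if `g` lands in the bottom copy of `S`, it is an isomorphism onto it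
because `S` is a brick; otherwise one inducts on the quotient of `X` by that copy.

For `f : M → N` one then inducts on `M`. If `f` kills the bottom copy `S ⊆ M`, it factors through
`M ⧸ S` and `ker f` is an extension of `S` by the kernel of the factored map. Otherwise `f` is
injective on it, `N ⧸ f(S) ∈ Filt(S)` by the key fact, and the induced map
`M ⧸ S → N ⧸ f(S)` has the same kernel and cokernel as `f`.

A nonzero subobject of `S` in `Filt(S)` contains a copy of `S`, which is all of `S` by brickness;
a simple object of `Filt(S)` equals its bottom copy of `S`.
-/

open Submodule LinearMap

section Subquotient

variable {R M N : Type*} [Ring R] [AddCommGroup M] [Module R M] [AddCommGroup N] [Module R N]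

abbrev Subquotient (p q : Submodule R M) : Type _ := q ⧸ p.comap q.subtype

def subquotientEquivOfEq {p p' q q' : Submodule R M} (hp : p = p') (hq : q = q') :
    Subquotient p q ≃ₗ[R] Subquotient p' q' := by
  subst hp hq; exact LinearEquiv.refl R _

noncomputable def subquotientEquivMap (f : M →ₗ[R] N) {p : Submodule R M} (q : Submodule R M)
    (hf : ker f ≤ p) : Subquotient p q ≃ₗ[R] Subquotient (p.map f) (q.map f) :=
  let φ : q →ₗ[R] Subquotient (p.map f) (q.map f) :=
    mkQ _ ∘ₗ f.restrict fun _ => mem_map_of_mem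
  have hker : ker φ = p.comap q.subtype := by
    ext x
    simp only [φ, mem_ker, comp_apply, mkQ_apply, Quotient.mk_eq_zero, mem_comap]
    change f x ∈ p.map f ↔ (x : M) ∈ p
    rw [← mem_comap, comap_map_eq, sup_eq_left.2 hf]
  have hsurj : Function.Surjective φ := by
    rintro ⟨⟨_, x, hx, rfl⟩⟩
    exact ⟨⟨x, hx⟩, rfl⟩
  (quotEquivOfEq _ _ hker.symm).trans (φ.quotKerEquivOfSurjective hsurj)

noncomputable def subquotientEquivMapMkQ (p q : Submodule R M) :
    Subquotient p q ≃ₗ[R] q.map p.mkQ :=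
  (quotEquivOfEq _ _ (by rw [ker_comp, ker_mkQ])).trans
    ((p.mkQ ∘ₗ q.subtype).quotKerEquivRange.trans
      (LinearEquiv.ofEq _ _ (by rw [range_comp, range_subtype])))

noncomputable def equivMapMkQOfDisjoint {p q : Submodule R M} (hpq : Disjoint p q) :
    q ≃ₗ[R] q.map p.mkQ :=
  (quotEquivOfEqBot _ (disjoint_iff_comap_eq_bot.1 hpq.symm)).symm.trans
    (subquotientEquivMapMkQ p q)

noncomputable def kerEquivKerMapQ (f : M →ₗ[R] N) {p : Submodule R M} (hp : Disjoint p (ker f)) :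
    ker f ≃ₗ[R] ker (p.mapQ (p.map f) f (le_comap_map f p)) :=
  (equivMapMkQOfDisjoint hp).trans
    (LinearEquiv.ofEq _ _ <| by
      rw [ker_mapQ, comap_map_eq, Submodule.map_sup, mkQ_map_self, bot_sup_eq])

noncomputable def quotientRangeMapQEquiv (f : M →ₗ[R] N) (p : Submodule R M) :
    ((N ⧸ p.map f) ⧸ range (p.mapQ (p.map f) f (le_comap_map f p))) ≃ₗ[R] N ⧸ range f :=
  (quotEquivOfEq _ _ (range_mapQ _ _ _ _)).trans (quotientQuotientEquivQuotient _ _ map_le_range)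

end Subquotient

def FiltOfLength (S : Type u) [AddCommGroup S] [Module A S] :
    ℕ → (M : Type u) → [AddCommGroup M] → [Module A M] → Prop
  | 0, M, _, _ => Subsingleton M
  | n + 1, M, _, _ => ∃ N : Submodule A M, Nonempty (N ≃ₗ[A] S) ∧ FiltOfLength S n (M ⧸ N)

section Filtrations

variable {A} {S : Type u} [AddCommGroup S] [Module A S]

section FiltOfLength

variable {M M' : Type u} [AddCommGroup M] [Module A M] [AddCommGroup M'] [Module A M']

theorem FiltOfLength.of_linearEquiv {n : ℕ} (h : FiltOfLength A S n M) (e : M ≃ₗ[A] M') :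
    FiltOfLength A S n M' := by
  induction n generalizing M M' with
  | zero =>
    have : Subsingleton M := h
    exact e.symm.toEquiv.subsingleton
  | succ n ih =>
    obtain ⟨N, ⟨eN⟩, hN⟩ := h
    let N' := N.map (e : M →ₗ[A] M')
    exact ⟨N', ⟨(e.submoduleMap N).symm.trans eN⟩, ih hN (Quotient.equiv N N' e rfl)⟩

theorem FiltOfLength.extension {a b : ℕ} {N : Submodule A M} (hN : FiltOfLength A S a N)
    (hQ : FiltOfLength A S b (M ⧸ N)) : FiltOfLength A S (a + b) M := by
  induction a generalizing M with
  | zero =>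
    have : Subsingleton N := hN
    rw [zero_add]
    exact hQ.of_linearEquiv (quotEquivOfEqBot N eq_bot_of_subsingleton)
  | succ a ih =>
    obtain ⟨N₁, ⟨e⟩, hN₁⟩ := hN
    let N₁' := N₁.map N.subtype
    have hN₁' : N₁'.comap N.subtype = N₁ := comap_map_eq_of_injective N.injective_subtype N₁
    rw [add_right_comm]
    refine ⟨N₁', ⟨(N₁.equivMapOfInjective _ N.injective_subtype).symm.trans e⟩,
      ih (N := N.map N₁'.mkQ) ?_ ?_⟩
    · exact hN₁.of_linearEquiv
        ((quotEquivOfEq _ _ hN₁'.symm).trans (subquotientEquivMapMkQ N₁' N))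
    · exact hQ.of_linearEquiv (quotientQuotientEquivQuotient N₁' N (map_subtype_le N N₁)).symm

theorem filtOfLength_of_chain {m : ℕ} {c : Fin (m + 1) → Submodule A M} (hc : Monotone c)
    (h0 : c 0 = ⊥) (hlast : c (Fin.last m) = ⊤)
    (hsq : ∀ i : Fin m, Nonempty (Subquotient (c i.castSucc) (c i.succ) ≃ₗ[A] S)) :
    FiltOfLength A S m M := by
  induction m generalizing M with
  | zero =>
    exact (Submodule.subsingleton_iff A).1 (subsingleton_iff_bot_eq_top.1 (h0.symm.trans hlast))
  | succ m ih =>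
    let N := c 1
    obtain ⟨e⟩ := hsq 0
    refine ⟨N, ⟨?_⟩, ih (c := fun i => (c i.succ).map N.mkQ) ?_ ?_ ?_ fun i => ?_⟩
    · exact (quotEquivOfEqBot _ (by simp)).symm.trans ((subquotientEquivOfEq h0.symm rfl).trans e)
    · exact fun i j hij => map_mono (hc (Fin.succ_le_succ_iff.2 hij))
    · exact mkQ_map_self N
    · rw [Fin.succ_last, hlast, Submodule.map_top, range_mkQ]
    · obtain ⟨e⟩ := hsq i.succ
      have hN : ker N.mkQ ≤ c i.castSucc.succ := by
        rw [ker_mkQ]; exact hc (Fin.succ_le_succ_iff.2 (Fin.zero_le _))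
      exact ⟨(subquotientEquivMap N.mkQ _ hN).symm.trans e⟩

theorem FiltOfLength.memFilt {n : ℕ} (h : FiltOfLength A S n M) : MemFilt A S M := by
  induction n generalizing M with
  | zero =>
    have : Subsingleton M := h
    exact ⟨0, fun _ => ⊥, monotone_const, rfl, subsingleton_iff_bot_eq_top.2 inferInstance,
      Fin.elim0⟩
  | succ n ih =>
    obtain ⟨N, ⟨e⟩, hN⟩ := h
    obtain ⟨m, c, hc, h0, hlast, hsq⟩ := ih hN
    refine ⟨m + 1, Fin.cons ⊥ fun i => (c i).comap N.mkQ, ?_, rfl, ?_, Fin.cases ?_ fun i => ?_⟩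
    · refine Fin.monotone_iff_le_succ.2 (Fin.cases (by simp) fun i => ?_)
      simp only [← Fin.succ_castSucc, Fin.cons_succ]
      exact comap_mono (hc (Fin.castSucc_le_succ i))
    · rw [← Fin.succ_last, Fin.cons_succ, hlast, comap_top]
    · have hN : (Fin.cons ⊥ fun i => (c i).comap N.mkQ : Fin (m + 2) → Submodule A M) 1 = N := by
        rw [← Fin.succ_zero_eq_one, Fin.cons_succ, h0, comap_bot, ker_mkQ]
      exact ⟨(subquotientEquivOfEq rfl hN).trans ((quotEquivOfEqBot _ (by simp)).trans e)⟩
    · obtain ⟨e⟩ := hsq i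
      have hmap (p : Submodule A (M ⧸ N)) : (p.comap N.mkQ).map N.mkQ = p :=
        map_comap_eq_of_surjective (mkQ_surjective N) p
      have hN : ker N.mkQ ≤ (c i.castSucc).comap N.mkQ := by
        rw [ker_mkQ]; exact le_comap_mkQ N _
      exact ⟨(subquotientEquivOfEq (by simp) rfl).trans
        ((subquotientEquivMap N.mkQ _ hN).trans ((subquotientEquivOfEq (hmap _) (hmap _)).trans e))⟩

end FiltOfLength

section MemFilt

variable {M M' : Type u} [AddCommGroup M] [Module A M] [AddCommGroup M'] [Module A M']

theorem memFilt_iff_exists_filtOfLength : MemFilt A S M ↔ ∃ n, FiltOfLength A S n M :=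
  ⟨fun ⟨m, _, hc, h0, hlast, hsq⟩ => ⟨m, filtOfLength_of_chain hc h0 hlast hsq⟩,
    fun ⟨_, h⟩ => h.memFilt⟩

theorem MemFilt.of_linearEquiv (h : MemFilt A S M) (e : M ≃ₗ[A] M') : MemFilt A S M' :=
  have ⟨_, hn⟩ := memFilt_iff_exists_filtOfLength.1 h
  (hn.of_linearEquiv e).memFilt

theorem MemFilt.extension {N : Submodule A M} (hN : MemFilt A S N) (hQ : MemFilt A S (M ⧸ N)) :
    MemFilt A S M :=
  have ⟨_, ha⟩ := memFilt_iff_exists_filtOfLength.1 hN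
  have ⟨_, hb⟩ := memFilt_iff_exists_filtOfLength.1 hQ
  (ha.extension hb).memFilt

theorem memFilt_of_subsingleton [Subsingleton M] : MemFilt A S M :=
  FiltOfLength.memFilt (n := 0) ‹_›

theorem memFilt_of_linearEquiv (e : M ≃ₗ[A] S) : MemFilt A S M :=
  FiltOfLength.memFilt (n := 1) ⟨⊤, ⟨topEquiv.trans e⟩, inferInstanceAs (Subsingleton (M ⧸ ⊤))⟩

theorem MemFilt.exists_linearEquiv [Nontrivial M] (h : MemFilt A S M) :
    ∃ N : Submodule A M, Nonempty (N ≃ₗ[A] S) := by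
  obtain ⟨_ | n, hn⟩ := memFilt_iff_exists_filtOfLength.1 h
  · exact absurd hn (not_subsingleton M)
  · obtain ⟨N, e, -⟩ := hn
    exact ⟨N, e⟩

theorem SimpleInFilt.nonempty_linearEquiv [Nontrivial S] (hM : SimpleInFilt A S M) :
    Nonempty (M ≃ₗ[A] S) := by
  obtain ⟨hM, _, hsimple⟩ := hM
  obtain ⟨M₁, ⟨e⟩⟩ := hM.exists_linearEquiv
  have := e.toEquiv.nontrivial
  have hM₁ : M₁ = ⊤ :=
    (hsimple M₁ (memFilt_of_linearEquiv e)).resolve_left (nontrivial_iff_ne_bot.1 this)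
  exact ⟨(topEquiv.symm.trans (LinearEquiv.ofEq _ _ hM₁.symm)).trans e⟩

end MemFilt

namespace IsBrick

variable (hS : IsBrick A S)
include hS

theorem bijective_of_ne_zero {T T' : Type u} [AddCommGroup T] [Module A T] [AddCommGroup T']
    [Module A T'] (e : T ≃ₗ[A] S) (e' : T' ≃ₗ[A] S) {g : T →ₗ[A] T'} (hg : g ≠ 0) :
    Function.Bijective g := by
  rcases hS.2 (e'.toLinearMap ∘ₗ g ∘ₗ e.symm.toLinearMap) with h | h
  · refine absurd (LinearMap.ext fun x => ?_) hg
    simpa using congr(e'.symm ($h (e x)))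
  · have hg : ⇑g = e'.symm ∘ (e'.toLinearMap ∘ₗ g ∘ₗ e.symm.toLinearMap) ∘ e := by ext; simp
    exact hg ▸ e'.symm.bijective.comp (h.comp e.bijective)

theorem injective_and_memFilt_quotient_range {T N : Type u} [AddCommGroup T] [Module A T]
    [AddCommGroup N] [Module A N] (e : T ≃ₗ[A] S) (hN : MemFilt A S N) {g : T →ₗ[A] N}
    (hg : g ≠ 0) : Function.Injective g ∧ MemFilt A S (N ⧸ range g) := by
  obtain ⟨n, hn⟩ := memFilt_iff_exists_filtOfLength.1 hN
  clear hN
  induction n generalizing N with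
  | zero =>
    have : Subsingleton N := hn
    exact absurd (Subsingleton.elim g 0) hg
  | succ n ih =>
    obtain ⟨N₁, ⟨e₁⟩, hn₁⟩ := hn
    by_cases hg₁ : N₁.mkQ ∘ₗ g = 0
    · have hle (x : T) : g x ∈ N₁ := (Quotient.mk_eq_zero N₁).1 congr($hg₁ x)
      have hg' : g = N₁.subtype ∘ₗ g.codRestrict N₁ hle := (subtype_comp_codRestrict g N₁ hle).symm
      have hbij : Function.Bijective (g.codRestrict N₁ hle) :=
        hS.bijective_of_ne_zero e e₁ fun h => hg (by rw [hg', h, comp_zero])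
      have hrange : range g = N₁ := by
        rw [hg', range_comp, range_eq_top.2 hbij.2, Submodule.map_top, range_subtype]
      exact ⟨fun x y hxy => hbij.1 (Subtype.ext hxy),
        hn₁.memFilt.of_linearEquiv (quotEquivOfEq _ _ hrange.symm)⟩
    · obtain ⟨hinj, hcoker⟩ := ih hg₁ hn₁
      have hdisj : Disjoint (range g) N₁ := by
        rw [disjoint_def]
        rintro _ ⟨x, rfl⟩ hx
        have hx0 : x = 0 := hinj (by simpa using hx)
        rw [hx0, map_zero]
      refine ⟨fun x y hxy => hinj (by simp [hxy]), MemFilt.extension (N := N₁.map (range g).mkQ)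
        (memFilt_of_linearEquiv ((equivMapMkQOfDisjoint hdisj).symm.trans e₁))
        (hcoker.of_linearEquiv ?_)⟩
      -- both sides are `N ⧸ (N₁ ⊔ range g)`
      exact (quotEquivOfEq _ _ (range_comp g N₁.mkQ)).trans
        ((quotientQuotientEquivQuotientSup N₁ (range g)).trans
          ((quotEquivOfEq _ _ (sup_comm _ _)).trans
            (quotientQuotientEquivQuotientSup (range g) N₁).symm))

theorem memFilt_ker_and_quotient_range {M N : Type u} [AddCommGroup M] [Module A M]
    [AddCommGroup N] [Module A N] (hM : MemFilt A S M) (hN : MemFilt A S N) (f : M →ₗ[A] N) :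
    MemFilt A S (ker f) ∧ MemFilt A S (N ⧸ range f) := by
  obtain ⟨m, hm⟩ := memFilt_iff_exists_filtOfLength.1 hM
  clear hM
  induction m generalizing M N with
  | zero =>
    have : Subsingleton M := hm
    exact ⟨memFilt_of_subsingleton,
      hN.of_linearEquiv (quotEquivOfEqBot _ (range_eq_bot.2 (Subsingleton.elim f 0))).symm⟩
  | succ m ih =>
    obtain ⟨M₁, ⟨e⟩, hm₁⟩ := hm
    by_cases hf : M₁ ≤ ker f
    · obtain ⟨hker, hcoker⟩ := ih hN (M₁.liftQ f hf) hm₁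
      refine ⟨MemFilt.extension (N := M₁.comap (ker f).subtype)
        (memFilt_of_linearEquiv ((comapSubtypeEquivOfLe hf).trans e)) (hker.of_linearEquiv ?_),
        hcoker.of_linearEquiv (quotEquivOfEq _ _ (range_liftQ _ _ _))⟩
      exact (LinearEquiv.ofEq _ _ (ker_liftQ _ _ _)).trans (subquotientEquivMapMkQ _ _).symm
    · have hg : f ∘ₗ M₁.subtype ≠ 0 := fun h => hf fun x hx => congr($h ⟨x, hx⟩)
      obtain ⟨hinj, hcoker⟩ := hS.injective_and_memFilt_quotient_range e hN hg
      have hdisj : Disjoint M₁ (ker f) := by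
        rw [disjoint_iff_comap_eq_bot, ← ker_comp]
        exact ker_eq_bot.2 hinj
      have hrange : range (f ∘ₗ M₁.subtype) = M₁.map f := by rw [range_comp, range_subtype]
      obtain ⟨hker, hcoker'⟩ := ih (hcoker.of_linearEquiv (quotEquivOfEq _ _ hrange))
        (M₁.mapQ (M₁.map f) f (le_comap_map f M₁)) hm₁
      exact ⟨hker.of_linearEquiv (kerEquivKerMapQ f hdisj).symm,
        hcoker'.of_linearEquiv (quotientRangeMapQEquiv f M₁)⟩

theorem simpleInFilt_self : SimpleInFilt A S S := by
  have := hS.1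
  refine ⟨memFilt_of_linearEquiv (LinearEquiv.refl A S), this,
    fun N hN => or_iff_not_imp_left.2 fun hN₀ => ?_⟩
  have := nontrivial_iff_ne_bot.2 hN₀
  obtain ⟨N₁, ⟨e⟩⟩ := hN.exists_linearEquiv
  have := e.toEquiv.nontrivial
  have hinj : Function.Injective (N.subtype ∘ₗ N₁.subtype) :=
    N.injective_subtype.comp N₁.injective_subtype
  have hbij := hS.bijective_of_ne_zero e (LinearEquiv.refl A S) (ne_zero_of_injective hinj)
  exact eq_top_iff.2 fun x _ => let ⟨y, hy⟩ := hbij.2 x; hy ▸ (y : N).2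

end IsBrick

end Filtrations

theorem stmt9
    (S : Type u) [AddCommGroup S] [Module A S]
    (hS : IsBrick A S) :
    (∀ (M : Type u) [AddCommGroup M] [Module A M]
        (N : Type u) [AddCommGroup N] [Module A N],
        MemFilt A S M → MemFilt A S N → ∀ f : M →ₗ[A] N,
        MemFilt A S ↥(LinearMap.ker f) ∧ MemFilt A S (N ⧸ LinearMap.range f)) ∧
    (∀ (M : Type u) [AddCommGroup M] [Module A M] (N : Submodule A M),
        MemFilt A S ↥N → MemFilt A S (M ⧸ N) → MemFilt A S M) ∧
    SimpleInFilt A S S ∧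
    (∀ (M : Type u) [AddCommGroup M] [Module A M],
        SimpleInFilt A S M → Nonempty (M ≃ₗ[A] S)) := by
  have := hS.1
  exact ⟨fun M _ _ N _ _ hM hN f => hS.memFilt_ker_and_quotient_range hM hN f,
    fun M _ _ N hN hQ => hN.extension hQ, hS.simpleInFilt_self,
    fun M _ _ hM => hM.nonempty_linearEquiv⟩

end Stmt9
end

section
/- Let Π be the preprojective algebra of type A_n over a field k, let I_cyc be the ideal of Π generated by all 2-cycles (paths a a* and a* a), and let X be a Π-module with Ext¹_Π(X, X) = 0 and End_Π(X) = k. Then I_cyc · X = 0, i.e., X is a module over Π̄ = Π/I_cyc. -/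
/-!
Let `x = ∑ a* a` over the upward arrows `a` of the double quiver. The preprojective relation at a
vertex `j` says that the 2-cycles at `j` through its upward and its downward arrow agree (a
missing arrow contributing `0`), so `e_j x = a* a` for every arrow `a` with source `j`.
Hence `x b = b b* b = b x` for every arrow `b`, and `x` is central. It is also nilpotent: at
vertex `0` there is no downward arrow, so `e_0 x = 0`, and `(e_{m+1} x)^(p+1) = b (e_m x)^p b*`
for the arrow `b : m → m + 1`. Multiplication by `x` is thus a nilpotent endomorphism of `X`;
since `End X = k` it is a nilpotent scalar, hence `0`. Every generator `b b*` of `I_cyc` is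
`e_j x` for the target `j` of `b`, so it kills `X`.
-/

namespace Stmt12

open FreeAlgebra

variable (k : Type) [Field k] (n : ℕ)

/-- Adjacency of the type `A_n` diagram on vertices `{0, …, n−1}`. -/
def adj (i j : Fin n) : Prop := i.val + 1 = j.val ∨ j.val + 1 = i.val

instance : DecidableRel (adj n) := fun i j => by unfold adj; infer_instance

/-- Arrows of the double quiver of type `A_n`. -/
abbrev Arrow := {p : Fin n × Fin n // adj n p.1 p.2}

instance : DecidablePred (fun p : Fin n × Fin n => adj n p.1 p.2) :=
  fun p => by unfold adj; infer_instance

/-- Generators: vertex idempotents and arrows. -/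
abbrev GenT := Fin n ⊕ Arrow n

theorem adj_symm : ∀ i j : Fin n, adj n i j → adj n j i := fun _ _ h => h.symm

/-- The sign (orientation) function for type `A_n`. -/
def ε (i j : Fin n) : k := if i.val < j.val then 1 else -1

/-- The reverse of an arrow. -/
def rev (a : Arrow n) : Arrow n := ⟨(a.1.2, a.1.1), (a.2).symm⟩

/-- The defining relations of the preprojective algebra of type `A_n`. -/
inductive Rel : FreeAlgebra k (GenT n) → FreeAlgebra k (GenT n) → Prop
  | idem (i j : Fin n) : Rel (ι k (Sum.inl i) * ι k (Sum.inl j))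
      (if i = j then ι k (Sum.inl i) else 0)
  | sum_one : Rel (∑ i : Fin n, ι k (Sum.inl i)) 1
  | arr_tgt (a : Arrow n) :
      Rel (ι k (Sum.inl a.1.2) * ι k (Sum.inr a)) (ι k (Sum.inr a))
  | arr_src (a : Arrow n) :
      Rel (ι k (Sum.inr a) * ι k (Sum.inl a.1.1)) (ι k (Sum.inr a))
  | pp : Rel (∑ a : Arrow n, ε k n a.1.1 a.1.2 •
      (ι k (Sum.inr (rev n a)) * ι k (Sum.inr a))) 0

/-- The preprojective algebra `Π` of type `A_n`. -/
abbrev PPA := RingQuot (Rel k n)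

/-- The image of an arrow in `Π`. -/
def arr (a : Arrow n) : PPA k n := RingQuot.mkRingHom (Rel k n) (ι k (Sum.inr a))

/-- The two-sided ideal `I_cyc` of `Π` generated by all 2-cycles `a a*`. -/
def Icyc : TwoSidedIdeal (PPA k n) :=
  TwoSidedIdeal.span {z | ∃ a : Arrow n, z = arr k n a * arr k n (rev n a)}

theorem smul_eq_zero_of_isNilpotent_of_commute {A K M : Type*} [Ring A] [Field K]
    [AddCommGroup M] [Module A M] [Module K M]
    (hend : ∀ f : M →ₗ[A] M, ∃ c : K, ∀ x : M, f x = c • x)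
    {z : A} (hz : ∀ y : A, Commute z y) (hnil : IsNilpotent z) (x : M) : z • x = 0 := by
  let f : M →ₗ[A] M :=
    { toFun := (z • ·)
      map_add' := smul_add z
      map_smul' := fun y v => by simp only [smul_smul, (hz y).eq, RingHom.id_apply] }
  obtain ⟨c, hc⟩ := hend f
  have hz' : ∀ v : M, z • v = c • v := hc
  have hpow : ∀ (N : ℕ) (v : M), z ^ N • v = c ^ N • v := by
    intro N
    induction N with
    | zero => simp only [pow_zero, one_smul, implies_true]
    | succ N ih => intro v; rw [pow_succ, mul_smul, hz', ih, smul_smul, ← pow_succ]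
  obtain ⟨N, hN⟩ := hnil
  have hcx : c ^ N • x = 0 := by rw [← hpow, hN, zero_smul]
  rcases smul_eq_zero.mp hcx with hc0 | rfl
  · rw [hz', eq_zero_of_pow_eq_zero hc0, zero_smul]
  · exact smul_zero z

def vertexIdem (i : Fin n) : PPA k n := RingQuot.mkRingHom (Rel k n) (ι k (Sum.inl i))

def twoCycle (a : Arrow n) : PPA k n := arr k n (rev n a) * arr k n a

lemma vertexIdem_mul_vertexIdem (i j : Fin n) :
    vertexIdem k n i * vertexIdem k n j = if i = j then vertexIdem k n i else 0 := by
  have h := RingQuot.mkRingHom_rel (Rel.idem (k := k) (n := n) i j)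
  rw [map_mul, apply_ite (RingQuot.mkRingHom (Rel k n)), map_zero] at h
  exact h

lemma sum_vertexIdem : ∑ i : Fin n, vertexIdem k n i = 1 := by
  have h := RingQuot.mkRingHom_rel (Rel.sum_one (k := k) (n := n))
  rw [map_sum, map_one] at h
  exact h

lemma vertexIdem_mul_arr (a : Arrow n) : vertexIdem k n a.1.2 * arr k n a = arr k n a := by
  have h := RingQuot.mkRingHom_rel (Rel.arr_tgt (k := k) (n := n) a)
  rw [map_mul] at h
  exact h

lemma arr_mul_vertexIdem (a : Arrow n) : arr k n a * vertexIdem k n a.1.1 = arr k n a := by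
  have h := RingQuot.mkRingHom_rel (Rel.arr_src (k := k) (n := n) a)
  rw [map_mul] at h
  exact h

lemma sum_smul_twoCycle : ∑ a : Arrow n, ε k n a.1.1 a.1.2 • twoCycle k n a = 0 := by
  have h := RingQuot.mkAlgHom_rel k (Rel.pp (k := k) (n := n))
  simp only [map_sum, map_zero, map_smul, map_mul] at h
  simpa only [twoCycle, arr, ← RingQuot.mkAlgHom_coe k (Rel k n), RingHom.coe_coe] using h

lemma vertexIdem_mul_arr_of_ne {i : Fin n} {a : Arrow n} (h : i ≠ a.1.2) :
    vertexIdem k n i * arr k n a = 0 := by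
  rw [← vertexIdem_mul_arr, ← mul_assoc, vertexIdem_mul_vertexIdem, if_neg h, zero_mul]

lemma arr_mul_vertexIdem_of_ne {i : Fin n} {a : Arrow n} (h : a.1.1 ≠ i) :
    arr k n a * vertexIdem k n i = 0 := by
  rw [← arr_mul_vertexIdem, mul_assoc, vertexIdem_mul_vertexIdem, if_neg h, mul_zero]

lemma vertexIdem_mul_twoCycle (i : Fin n) (a : Arrow n) :
    vertexIdem k n i * twoCycle k n a = if a.1.1 = i then twoCycle k n a else 0 := by
  split_ifs with h
  · subst h
    rw [twoCycle, ← mul_assoc]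
    exact congrArg (· * arr k n a) (vertexIdem_mul_arr k n (rev n a))
  · rw [twoCycle, ← mul_assoc, vertexIdem_mul_arr_of_ne k n (Ne.symm h), zero_mul]

lemma twoCycle_mul_vertexIdem (a : Arrow n) (i : Fin n) :
    twoCycle k n a * vertexIdem k n i = if a.1.1 = i then twoCycle k n a else 0 := by
  split_ifs with h
  · subst h
    rw [twoCycle, mul_assoc, arr_mul_vertexIdem]
  · rw [twoCycle, mul_assoc, arr_mul_vertexIdem_of_ne k n h, mul_zero]

lemma sum_smul_twoCycle_src_eq (j : Fin n) :
    ∑ a with a.1.1 = j, ε k n a.1.1 a.1.2 • twoCycle k n a = 0 := by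
  have h := congrArg (vertexIdem k n j * ·) (sum_smul_twoCycle k n)
  simp only [Finset.mul_sum, mul_smul_comm, vertexIdem_mul_twoCycle, smul_ite, smul_zero,
    mul_zero] at h
  rwa [Finset.sum_filter]

lemma sum_up_twoCycle_eq_sum_down (j : Fin n) :
    ∑ a with a.1.1 = j ∧ a.1.1 < a.1.2, twoCycle k n a =
      ∑ a with a.1.1 = j ∧ ¬a.1.1 < a.1.2, twoCycle k n a := by
  have h := sum_smul_twoCycle_src_eq k n j
  simp only [ε, Fin.val_fin_lt, ite_smul, one_smul] at h
  rwa [Finset.sum_ite, Finset.filter_filter, Finset.filter_filter, ← Finset.smul_sum,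
    neg_one_smul, add_neg_eq_zero] at h

lemma Arrow.ext_of_src_of_lt_iff {a b : Arrow n} (hsrc : a.1.1 = b.1.1)
    (hlt : a.1.1 < a.1.2 ↔ b.1.1 < b.1.2) : a = b := by
  obtain ⟨⟨i, j⟩, hij⟩ := a
  obtain ⟨⟨i', j'⟩, hij'⟩ := b
  simp only [adj, Fin.lt_def] at hsrc hlt hij hij'
  subst hsrc
  congr
  ext
  omega

/-- Only upward arrows are summed: the sum over all arrows is `2 • cycleSum` by the
preprojective relations, which vanishes in characteristic `2`. -/
def cycleSum : PPA k n := ∑ a with a.1.1 < a.1.2, twoCycle k n a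

lemma vertexIdem_mul_cycleSum (j : Fin n) :
    vertexIdem k n j * cycleSum k n = ∑ a with a.1.1 = j ∧ a.1.1 < a.1.2, twoCycle k n a := by
  rw [cycleSum, Finset.mul_sum, Finset.sum_filter, Finset.sum_filter]
  refine Finset.sum_congr rfl fun a _ => ?_
  rw [vertexIdem_mul_twoCycle]
  by_cases hj : a.1.1 = j <;> by_cases hlt : a.1.1 < a.1.2 <;> simp [hj, hlt]

lemma commute_vertexIdem_cycleSum (j : Fin n) : Commute (vertexIdem k n j) (cycleSum k n) := by
  rw [Commute, SemiconjBy, cycleSum, Finset.mul_sum, Finset.sum_mul]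
  simp only [vertexIdem_mul_twoCycle, twoCycle_mul_vertexIdem]

lemma vertexIdem_src_mul_cycleSum (a : Arrow n) :
    vertexIdem k n a.1.1 * cycleSum k n = twoCycle k n a := by
  rw [vertexIdem_mul_cycleSum]
  by_cases hlt : a.1.1 < a.1.2
  · refine Finset.sum_eq_single_of_mem a (Finset.mem_filter.mpr ⟨Finset.mem_univ a, rfl, hlt⟩)
      fun b hb hba => (hba ?_).elim
    simp only [Finset.mem_filter, Finset.mem_univ, true_and] at hb
    exact Arrow.ext_of_src_of_lt_iff n hb.1 (iff_of_true hb.2 hlt)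
  · rw [sum_up_twoCycle_eq_sum_down]
    refine Finset.sum_eq_single_of_mem a (Finset.mem_filter.mpr ⟨Finset.mem_univ a, rfl, hlt⟩)
      fun b hb hba => (hba ?_).elim
    simp only [Finset.mem_filter, Finset.mem_univ, true_and] at hb
    exact Arrow.ext_of_src_of_lt_iff n hb.1 (iff_of_false hb.2 hlt)

lemma vertexIdem_zero_mul_cycleSum (h : 0 < n) : vertexIdem k n ⟨0, h⟩ * cycleSum k n = 0 := by
  rw [vertexIdem_mul_cycleSum, sum_up_twoCycle_eq_sum_down]
  refine Finset.sum_eq_zero fun b hb => ?_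
  obtain ⟨hsrc, hlt⟩ := (Finset.mem_filter.mp hb).2
  have hadj := b.2
  simp only [adj, Fin.ext_iff, Fin.lt_def] at hsrc hlt hadj
  omega

lemma commute_cycleSum_arr (a : Arrow n) : Commute (cycleSum k n) (arr k n a) :=
  calc cycleSum k n * arr k n a
      = vertexIdem k n (rev n a).1.1 * cycleSum k n * arr k n a := by
        rw [(commute_vertexIdem_cycleSum k n _).eq, mul_assoc]
        exact congrArg (cycleSum k n * ·) (vertexIdem_mul_arr k n a).symm
    _ = arr k n a * (arr k n (rev n a) * arr k n a) := by
        rw [vertexIdem_src_mul_cycleSum, ← mul_assoc]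
        rfl
    _ = arr k n a * cycleSum k n := by
        rw [← twoCycle, ← vertexIdem_src_mul_cycleSum, ← mul_assoc, arr_mul_vertexIdem]

lemma commute_cycleSum (y : PPA k n) : Commute (cycleSum k n) y := by
  obtain ⟨z, rfl⟩ := RingQuot.mkAlgHom_surjective k (Rel k n) y
  induction z using FreeAlgebra.induction with
  | grade0 r =>
    rw [AlgHom.commutes]
    exact Algebra.commute_algebraMap_right r _
  | grade1 g =>
    have hmk : RingQuot.mkAlgHom k (Rel k n) (ι k g) = RingQuot.mkRingHom (Rel k n) (ι k g) := by
      rw [← RingQuot.mkAlgHom_coe k]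
      rfl
    rw [hmk]
    rcases g with i | a
    · exact (commute_vertexIdem_cycleSum k n i).symm
    · exact commute_cycleSum_arr k n a
  | mul a b ha hb => rw [map_mul]; exact ha.mul_right hb
  | add a b ha hb => rw [map_add]; exact ha.add_right hb

lemma twoCycle_pow_succ (a : Arrow n) (p : ℕ) :
    twoCycle k n a ^ (p + 1) = arr k n (rev n a) * twoCycle k n (rev n a) ^ p * arr k n a := by
  rw [twoCycle, pow_succ, ← mul_assoc, mul_pow_mul]
  rfl

lemma vertexIdem_mul_cycleSum_pow_eq_zero (m : ℕ) (hm : m < n) :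
    (vertexIdem k n ⟨m, hm⟩ * cycleSum k n) ^ (m + 1) = 0 := by
  induction m with
  | zero => rw [vertexIdem_zero_mul_cycleSum, zero_pow (Nat.succ_ne_zero 0)]
  | succ m ih =>
    let a : Arrow n := ⟨(⟨m + 1, hm⟩, ⟨m, by omega⟩), Or.inr rfl⟩
    rw [vertexIdem_src_mul_cycleSum k n a, twoCycle_pow_succ,
      ← vertexIdem_src_mul_cycleSum, show (rev n a).1.1 = ⟨m, by omega⟩ from rfl, ih, mul_zero,
      zero_mul]

lemma isNilpotent_cycleSum : IsNilpotent (cycleSum k n) := by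
  refine ⟨n, ?_⟩
  have hvanish (j : Fin n) : vertexIdem k n j * cycleSum k n ^ n = 0 := by
    have hidem : IsIdempotentElem (vertexIdem k n j) := by
      rw [IsIdempotentElem, vertexIdem_mul_vertexIdem, if_pos rfl]
    rw [← hidem.pow_eq j.pos.ne', ← (commute_vertexIdem_cycleSum k n j).mul_pow]
    exact pow_eq_zero_of_le j.isLt (vertexIdem_mul_cycleSum_pow_eq_zero k n j j.isLt)
  rw [← one_mul (cycleSum k n ^ n), ← sum_vertexIdem, Finset.sum_mul]
  exact Finset.sum_eq_zero fun j _ => hvanish j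

lemma smul_eq_zero_of_mem_Icyc {X : Type*} [AddCommGroup X] [Module (PPA k n) X]
    (hx : ∀ x : X, cycleSum k n • x = 0) {r : PPA k n} (hr : r ∈ Icyc k n) (x : X) :
    r • x = 0 := by
  have hle : Icyc k n ≤ TwoSidedIdeal.ker (Module.toAddMonoidEnd (PPA k n) X) := by
    refine TwoSidedIdeal.span_le.mpr ?_
    rintro _ ⟨a, rfl⟩
    rw [SetLike.mem_coe, TwoSidedIdeal.mem_ker]
    ext x
    change twoCycle k n (rev n a) • x = 0
    rw [← vertexIdem_src_mul_cycleSum, mul_smul, hx, smul_zero]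
  exact DFunLike.congr_fun ((TwoSidedIdeal.mem_ker _).mp (hle hr)) x

theorem stmt12 (X : Type) [AddCommGroup X] [Module (PPA k n) X] [Module k X]
    (hend : ∀ f : X →ₗ[PPA k n] X, ∃ c : k, ∀ x : X, f x = c • x) :
    ∀ r ∈ Icyc k n, ∀ x : X, r • x = 0 :=
  fun _ hr => smul_eq_zero_of_mem_Icyc k n
    (smul_eq_zero_of_isNilpotent_of_commute hend (commute_cycleSum k n)
      (isNilpotent_cycleSum k n)) hr

end Stmt12
end

section
/- Let W be a finite Weyl group of simply-laced type with weak order, Π the corresponding preprojective algebra, and for a Hasse arrow ws_i → w (meaning ℓ(ws_i) = ℓ(w) + 1) define the layer L(ws_i → w) = I(w)/I(ws_i). In a square interval of the weak order with bottom u s_i s_j = u s_j s_i (where s_i s_j = s_j s_i), the layer labels on opposite sides are equal: L(u → us_i) = L(us_j → us_is_j) and L(u → us_j) = L(us_i → us_is_j). -/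
/-!
Write `J = I_j I_i`. For `v ∉ {i, j}` we have `e_v = (1 - e_j) e_v (1 - e_i) ∈ J`, and since `i`, `j`
are non-adjacent and there are no loops, every arrow has an endpoint outside `{i, j}`, so every
arrow lies in `J`. Hence `e_i` is central modulo `J`, and `(1 - e_i) p (1 - e_j) ≡ p (1 - e_j) (1 - e_i)`
gives `I_i I_j ⊆ I_j I_i`; by symmetry `I(u s_i s_j) = I(u s_j s_i)`.

The map `I(u s_j) → I(u)/I(u s_i)` is onto because `a ≡ a e_i (1 - e_j)` modulo `I(u s_i)` (as
`e_i e_j = 0`), and its kernel `I(u s_j) ∩ I(u s_i)` is `I(u s_j s_i)`: write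
`x = x (1 - e_i) + x e_i (1 - e_j)`, where the first term lies in `I(u s_j) I_i` and the second in
`I(u s_i) I_j = I(u s_i s_j)`.
-/

namespace Stmt14

open FreeAlgebra

section

variable (k : Type) [Field k]
variable (V : Type) [Fintype V] [DecidableEq V]
variable (adj : V → V → Prop) [DecidableRel adj]

/-- Arrows of the double quiver. -/
abbrev Arrow := {p : V × V // adj p.1 p.2}

instance : DecidablePred (fun p : V × V => adj p.1 p.2) := fun p => ‹DecidableRel adj› p.1 p.2

/-- Generators: vertex idempotents and arrows. -/
abbrev GenT := V ⊕ Arrow V adj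

/-- Defining relations of the preprojective algebra. -/
inductive Rel (hsym : ∀ i j, adj i j → adj j i) (ε : V → V → k) :
    FreeAlgebra k (GenT V adj) → FreeAlgebra k (GenT V adj) → Prop
  | idem (i j : V) : Rel hsym ε (ι k (Sum.inl i) * ι k (Sum.inl j))
      (if i = j then ι k (Sum.inl i) else 0)
  | sum_one : Rel hsym ε (∑ i : V, ι k (Sum.inl i)) 1
  | arr_tgt (a : Arrow V adj) :
      Rel hsym ε (ι k (Sum.inl a.1.2) * ι k (Sum.inr a)) (ι k (Sum.inr a))
  | arr_src (a : Arrow V adj) :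
      Rel hsym ε (ι k (Sum.inr a) * ι k (Sum.inl a.1.1)) (ι k (Sum.inr a))
  | pp : Rel hsym ε
      (∑ a : Arrow V adj, ε a.1.1 a.1.2 •
        (ι k (Sum.inr ⟨(a.1.2, a.1.1), hsym _ _ a.2⟩) * ι k (Sum.inr a))) 0

/-- The preprojective algebra of the graph `(V, adj)`. -/
abbrev PPA (hsym : ∀ i j, adj i j → adj j i) (ε : V → V → k) :=
  RingQuot (Rel k V adj hsym ε)

/-- The Cartan form of the graph is positive definite, i.e. the graph is a (disjoint
union of) simply-laced Dynkin diagram(s). -/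
def IsDynkin : Prop :=
  ∀ x : V → ℚ, x ≠ 0 →
    0 < ∑ i : V, 2 * x i ^ 2 - ∑ a : Arrow V adj, x a.1.1 * x a.1.2

variable (hsym : ∀ i j, adj i j → adj j i) (ε : V → V → k)

/-- The idempotent `e_i ∈ Π`. -/
def e (i : V) : PPA k V adj hsym ε :=
  RingQuot.mkRingHom (Rel k V adj hsym ε) (ι k (Sum.inl i))

/-- Generating set of the ideal `I(ω) = I_{i_1} ⋯ I_{i_k}` (where `I_i = Π(1−e_i)Π`)
for the word `ω = [i_1, …, i_k]`. -/
def GenSet : List V → Set (PPA k V adj hsym ε)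
  | [] => Set.univ
  | i :: ω => {x | ∃ p : PPA k V adj hsym ε, ∃ g ∈ GenSet ω,
      x = (1 - e k V adj hsym ε i) * p * g}

/-- The two-sided ideal `I(ω) = I_{i_1} ⋯ I_{i_k}` of `Π`, as a left submodule. -/
def Idl (ω : List V) : Submodule (PPA k V adj hsym ε) (PPA k V adj hsym ε) :=
  Submodule.span _ (GenSet k V adj hsym ε ω)

noncomputable instance (A : Submodule (PPA k V adj hsym ε) (PPA k V adj hsym ε)) :
    HasQuotient ↥A (Submodule (PPA k V adj hsym ε) ↥A) :=
  Submodule.hasQuotient (R := PPA k V adj hsym ε) (M := ↥A)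

/-- The subquotient `I(α)/I(β)` of `Π` (for `I(β) ⊆ I(α)`), a left `Π`-module. -/
abbrev Idlquot (α β : List V) :=
  ↥(Idl k V adj hsym ε α) ⧸
    (Idl k V adj hsym ε β).comap (Idl k V adj hsym ε α).subtype

/-- The Coxeter matrix of the graph `(V, adj)` (simply laced). -/
def cmat : CoxeterMatrix V where
  M := Matrix.of fun i j => if i = j then 1 else if adj i j then 3 else 2
  isSymm := by
    ext i j
    by_cases h : i = j
    · subst h; simp
    · have h' : ¬ (j = i) := fun hh => h hh.symm
      by_cases ha : adj i j
      · simp [Matrix.transpose_apply, h, h', ha, hsym _ _ ha]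
      · have ha' : ¬ adj j i := fun hh => ha (hsym _ _ hh)
        simp [Matrix.transpose_apply, h, h', ha, ha']
  diagonal := by intro i; simp
  off_diagonal := by
    intro i j h
    simp only [Matrix.of_apply, if_neg (fun hh => h hh)]
    split <;> omega

def arr (a : Arrow V adj) : PPA k V adj hsym ε :=
  RingQuot.mkRingHom (Rel k V adj hsym ε) (ι k (Sum.inr a))

section Development

variable {k V adj hsym ε}

local notation "𝚷" => PPA k V adj hsym ε
local notation "𝐞" => e k V adj hsym ε
local notation "𝐚" => arr k V adj hsym ε
local notation "𝐈" => Idl k V adj hsym ε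

theorem e_mul_e (i j : V) : 𝐞 i * 𝐞 j = if i = j then 𝐞 i else 0 := by
  have h := RingQuot.mkRingHom_rel (Rel.idem (hsym := hsym) (ε := ε) i j)
  rw [map_mul, apply_ite (RingQuot.mkRingHom _), map_zero] at h
  exact h

theorem e_mul_e_of_ne {i j : V} (h : i ≠ j) : 𝐞 i * 𝐞 j = 0 := by
  rw [e_mul_e, if_neg h]

theorem e_commute (i j : V) : Commute (𝐞 i) (𝐞 j) := by
  by_cases h : i = j
  · rw [h]
  · exact (e_mul_e_of_ne h).trans (e_mul_e_of_ne (Ne.symm h)).symm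

theorem e_tgt_mul_arr (a : Arrow V adj) : 𝐞 a.1.2 * 𝐚 a = 𝐚 a :=
  (map_mul _ _ _).symm.trans (RingQuot.mkRingHom_rel (Rel.arr_tgt (hsym := hsym) (ε := ε) a))

theorem arr_mul_e_src (a : Arrow V adj) : 𝐚 a * 𝐞 a.1.1 = 𝐚 a :=
  (map_mul _ _ _).symm.trans (RingQuot.mkRingHom_rel (Rel.arr_src (hsym := hsym) (ε := ε) a))

theorem PPA.induction {P : 𝚷 → Prop} (scalar : ∀ r : k, P (algebraMap k 𝚷 r))
    (vertex : ∀ v, P (𝐞 v)) (arrow : ∀ a, P (𝐚 a)) (add : ∀ x y, P x → P y → P (x + y))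
    (mul : ∀ x y, P x → P y → P (x * y)) (x : 𝚷) : P x := by
  obtain ⟨z, rfl⟩ := RingQuot.mkAlgHom_surjective k (Rel k V adj hsym ε) x
  induction z using FreeAlgebra.induction with
  | grade0 r => simpa only [AlgHom.commutes] using scalar r
  | grade1 g =>
    rw [← AlgHom.coe_toRingHom, RingQuot.mkAlgHom_coe]
    cases g with
    | inl v => exact vertex v
    | inr a => exact arrow a
  | mul x y hx hy => simpa only [map_mul] using mul _ _ hx hy
  | add x y hx hy => simpa only [map_add] using add _ _ hx hy

theorem one_sub_e_mul_mem_idl_cons {β : List V} {x : 𝚷} (hx : x ∈ 𝐈 β) (i : V) (p : 𝚷) :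
    (1 - 𝐞 i) * p * x ∈ 𝐈 (i :: β) := by
  induction hx using Submodule.span_induction generalizing p with
  | mem g hg => exact Submodule.subset_span ⟨p, g, hg, rfl⟩
  | zero => simp
  | add x y _ _ hx hy => simpa only [mul_add] using Submodule.add_mem _ (hx p) (hy p)
  | smul c x _ hx => simpa only [smul_eq_mul, mul_assoc] using hx (p * c)

theorem one_sub_e_mem_idl (i : V) : 1 - 𝐞 i ∈ 𝐈 [i] := by
  simpa using one_sub_e_mul_mem_idl_cons (Submodule.subset_span trivial : (1 : 𝚷) ∈ 𝐈 []) i 1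

theorem mul_mem_idl_append {α β : List V} {x y : 𝚷} (hx : x ∈ 𝐈 α) (hy : y ∈ 𝐈 β) :
    x * y ∈ 𝐈 (α ++ β) := by
  induction hx using Submodule.span_induction with
  | mem g hg =>
    induction α generalizing g with
    | nil => exact Submodule.smul_mem _ g hy
    | cons i α ih =>
      obtain ⟨p, g, hg, rfl⟩ := hg
      rw [mul_assoc]
      exact one_sub_e_mul_mem_idl_cons (ih g hg) i p
  | zero => simp
  | add x y _ _ hx hy => simpa only [add_mul] using Submodule.add_mem _ hx hy
  | smul c x _ hx => simpa only [smul_eq_mul, mul_assoc] using Submodule.smul_mem _ c hx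

theorem mul_mem_idl {ω : List V} {x : 𝚷} (hx : x ∈ 𝐈 ω) (r : 𝚷) : x * r ∈ 𝐈 ω := by
  simpa using mul_mem_idl_append hx (Submodule.subset_span trivial : r ∈ 𝐈 [])

theorem idl_append_le (α β : List V) : 𝐈 (α ++ β) ≤ 𝐈 α := by
  refine Submodule.span_mono fun x hx => ?_
  induction α generalizing x with
  | nil => trivial
  | cons i α ih =>
    obtain ⟨p, g, hg, rfl⟩ := hx
    exact ⟨p, g, ih _ hg, rfl⟩

theorem idl_append_mono (α : List V) {β γ : List V} (h : 𝐈 β ≤ 𝐈 γ) :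
    𝐈 (α ++ β) ≤ 𝐈 (α ++ γ) := by
  refine Submodule.span_le.mpr fun x hx => ?_
  induction α generalizing x with
  | nil => exact h (Submodule.subset_span hx)
  | cons i α ih =>
    obtain ⟨p, g, hg, rfl⟩ := hx
    exact one_sub_e_mul_mem_idl_cons (ih _ hg) i p

def layerMap (i j : V) (ω : List V) :
    𝐈 (ω ++ [j]) →ₗ[𝚷] Idlquot k V adj hsym ε ω (ω ++ [i]) :=
  Submodule.mkQ _ ∘ₗ Submodule.inclusion (idl_append_le ω [j])

section Square

variable {i j : V}

theorem e_mem_idl_pair {v : V} (hvi : v ≠ i) (hvj : v ≠ j) : 𝐞 v ∈ 𝐈 [j, i] := by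
  have h : (1 - 𝐞 j) * 𝐞 v * (1 - 𝐞 i) ∈ 𝐈 [j, i] :=
    one_sub_e_mul_mem_idl_cons (one_sub_e_mem_idl i) j _
  rwa [sub_mul, one_mul, e_mul_e_of_ne hvj.symm, sub_zero, mul_sub, mul_one,
    e_mul_e_of_ne hvi, sub_zero] at h

theorem arr_mem_idl_pair (hirr : ∀ v, ¬ adj v v) (hnadj : ¬ adj i j) (a : Arrow V adj) :
    𝐚 a ∈ 𝐈 [j, i] := by
  obtain ⟨⟨s, t⟩, hst⟩ := a
  by_cases hs : s = i ∨ s = j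
  · have ht : t ≠ i ∧ t ≠ j := by
      rcases hs with rfl | rfl <;> refine ⟨?_, ?_⟩ <;> rintro rfl <;>
        first | exact hirr _ hst | exact hnadj hst | exact hnadj (hsym _ _ hst)
    rw [← e_tgt_mul_arr]
    exact mul_mem_idl (e_mem_idl_pair ht.1 ht.2) _
  · rw [not_or] at hs
    rw [← arr_mul_e_src]
    exact Submodule.smul_mem _ _ (e_mem_idl_pair hs.1 hs.2)

theorem mul_e_sub_e_mul_mem_idl_pair (hirr : ∀ v, ¬ adj v v) (hnadj : ¬ adj i j) (x : 𝚷) :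
    x * 𝐞 i - 𝐞 i * x ∈ 𝐈 [j, i] := by
  induction x using PPA.induction with
  | scalar r => rw [Algebra.commutes r, sub_self]; exact zero_mem _
  | vertex v => rw [(e_commute v i).eq, sub_self]; exact zero_mem _
  | arrow a =>
    have ha : 𝐚 a ∈ 𝐈 [j, i] := arr_mem_idl_pair hirr hnadj a
    exact sub_mem (mul_mem_idl ha _) (Submodule.smul_mem _ _ ha)
  | add x y hx hy => rw [add_mul, mul_add, add_sub_add_comm]; exact add_mem hx hy
  | mul x y hx hy =>
    rw [show x * y * 𝐞 i - 𝐞 i * (x * y) = x * (y * 𝐞 i - 𝐞 i * y) + (x * 𝐞 i - 𝐞 i * x) * y by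
      simp only [mul_sub, sub_mul, mul_assoc]; abel]
    exact add_mem (Submodule.smul_mem _ x hy) (mul_mem_idl hx y)

theorem idl_pair_le_swap (hirr : ∀ v, ¬ adj v v) (hnadj : ¬ adj i j) : 𝐈 [i, j] ≤ 𝐈 [j, i] := by
  refine Submodule.span_le.mpr ?_
  rintro _ ⟨p, _, ⟨q, g, -, rfl⟩, rfl⟩
  have hsplit : (1 - 𝐞 i) * p * (1 - 𝐞 j) =
      (p * 𝐞 i - 𝐞 i * p) * (1 - 𝐞 j) + p * ((1 - 𝐞 j) * 1 * (1 - 𝐞 i)) := by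
    simp only [mul_sub, sub_mul, mul_one, one_mul, mul_assoc, (e_commute j i).eq]
    abel
  have h : (1 - 𝐞 i) * p * (1 - 𝐞 j) ∈ 𝐈 [j, i] := by
    rw [hsplit]
    exact add_mem (mul_mem_idl (mul_e_sub_e_mul_mem_idl_pair hirr hnadj p) _)
      (Submodule.smul_mem _ p (one_sub_e_mul_mem_idl_cons (one_sub_e_mem_idl i) j 1))
  rw [SetLike.mem_coe]
  simpa only [mul_assoc] using mul_mem_idl h (q * g)

theorem idl_append_pair_swap (hirr : ∀ v, ¬ adj v v) (hnadj : ¬ adj i j) (ω : List V) :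
    𝐈 (ω ++ [i, j]) = 𝐈 (ω ++ [j, i]) :=
  le_antisymm (idl_append_mono ω (idl_pair_le_swap hirr hnadj))
    (idl_append_mono ω (idl_pair_le_swap hirr fun h => hnadj (hsym _ _ h)))

theorem layerMap_surjective (hij : i ≠ j) (ω : List V) :
    Function.Surjective (layerMap (k := k) (hsym := hsym) (ε := ε) i j ω) := by
  intro q
  obtain ⟨a, rfl⟩ := Submodule.mkQ_surjective _ q
  refine ⟨⟨a * 𝐞 i * (1 - 𝐞 j), mul_mem_idl_append (mul_mem_idl a.2 _) (one_sub_e_mem_idl j)⟩, ?_⟩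
  rw [layerMap, LinearMap.comp_apply, Submodule.mkQ_apply, Submodule.mkQ_apply,
    Submodule.Quotient.eq, Submodule.mem_comap]
  have h : a * 𝐞 i * (1 - 𝐞 j) - a = -(a * (1 - 𝐞 i)) := by
    rw [mul_assoc, mul_sub, mul_one, e_mul_e_of_ne hij, sub_zero, mul_sub, mul_one]
    abel
  simpa [h] using mul_mem_idl_append a.2 (one_sub_e_mem_idl i)

theorem ker_layerMap (hirr : ∀ v, ¬ adj v v) (hij : i ≠ j) (hnadj : ¬ adj i j) (ω : List V) :
    LinearMap.ker (layerMap (k := k) (hsym := hsym) (ε := ε) i j ω) =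
      (𝐈 (ω ++ [j, i])).comap (𝐈 (ω ++ [j])).subtype := by
  ext x
  rw [LinearMap.mem_ker, layerMap, LinearMap.comp_apply, Submodule.mkQ_apply,
    Submodule.Quotient.mk_eq_zero, Submodule.mem_comap, Submodule.mem_comap]
  constructor
  · intro hx
    have h : (x : 𝚷) = x * (1 - 𝐞 i) + x * 𝐞 i * (1 - 𝐞 j) := by
      rw [mul_assoc, mul_sub (𝐞 i), mul_one, e_mul_e_of_ne hij, sub_zero, mul_sub, mul_one]
      abel
    have hi : (x : 𝚷) * (1 - 𝐞 i) ∈ 𝐈 (ω ++ [j, i]) := by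
      simpa using mul_mem_idl_append x.2 (one_sub_e_mem_idl i)
    have hj : (x : 𝚷) * 𝐞 i * (1 - 𝐞 j) ∈ 𝐈 (ω ++ [j, i]) := by
      rw [← idl_append_pair_swap hirr hnadj]
      simpa using mul_mem_idl_append (mul_mem_idl hx _) (one_sub_e_mem_idl j)
    rw [Submodule.subtype_apply, h]
    exact add_mem hi hj
  · intro hx
    rw [← idl_append_pair_swap hirr hnadj] at hx
    simpa using idl_append_le (ω ++ [i]) [j] (by simpa using hx)

noncomputable def layerEquiv (hirr : ∀ v, ¬ adj v v) (hij : i ≠ j) (hnadj : ¬ adj i j)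
    (ω : List V) :
    Idlquot k V adj hsym ε ω (ω ++ [i]) ≃ₗ[𝚷] Idlquot k V adj hsym ε (ω ++ [j]) (ω ++ [j, i]) :=
  (LinearMap.quotKerEquivOfSurjective _ (layerMap_surjective hij ω)).symm ≪≫ₗ
    Submodule.quotEquivOfEq _ _ (ker_layerMap hirr hij hnadj ω)

end Square

end Development

theorem stmt14
    (hirr : ∀ i, ¬ adj i i)
    (i j : V) (hij : i ≠ j) (hnadj : ¬ adj i j)
    (ω : List V) :
    Nonempty (Idlquot k V adj hsym ε ω (ω ++ [i]) ≃ₗ[PPA k V adj hsym ε]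
        Idlquot k V adj hsym ε (ω ++ [j]) (ω ++ [j, i])) ∧
    Nonempty (Idlquot k V adj hsym ε ω (ω ++ [j]) ≃ₗ[PPA k V adj hsym ε]
        Idlquot k V adj hsym ε (ω ++ [i]) (ω ++ [i, j])) :=
  ⟨⟨layerEquiv hirr hij hnadj ω⟩, ⟨layerEquiv hirr hij.symm (fun h => hnadj (hsym _ _ h)) ω⟩⟩

end

end Stmt14
end

section
/- Let W be the Weyl group of type D_n, realized as signed permutations w of {±1, ..., ±n} with w(−a) = −w(a) and an even number of sign changes, written w = [i_1, ..., i_n] with i_m = w(m). Then w is join-irreducible in the weak order if and only if either (i) i_1 < i_2 < ... < i_n and −i_1 > i_2, or (ii) there exists ℓ ∈ {1, ..., n−1} with i_1 < ... < i_ℓ > i_{ℓ+1} < ... < i_n and −i_1 < i_2. -/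
/-!
The length `ℓ(w)` counts pairs `a < b` with `w b < w a` or `w b < -w a`. Right multiplication
by a simple reflection `s` permutes these pairs, except the single pair attached to `s`, so
`ℓ(ws) = ℓ(w) ± 1`, with `-` exactly when `w (l+1) < w l` (for `s = s_l`), resp.
`w 2 < -w 1` (for `s = s_{-1}`). An element with no such descent is increasing on `1, …, n`
with at most one negative value, and the even number of sign changes makes it the identity.
Hence `ℓ(u) = 0` forces `u = 1` and `ℓ` is subadditive, which shows that the elements covered
by `x` in the weak order are exactly the `x s` with `s` a right descent of `x`. So `x` is
join-irreducible iff it has exactly one right descent, and (i), (ii) say that this descent is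
`s_{-1}`, resp. `s_l`.
-/

namespace Stmt16

/-- Membership in the Weyl group of type `D_n`, realized as permutations `w` of `ℤ`
(restricting to signed permutations of `{±1, …, ±n}`) with `w(−a) = −w(a)`, fixing
everything beyond `n`, and with an even number of sign changes. -/
def IsD (n : ℕ) (w : Equiv.Perm ℤ) : Prop :=
  (∀ a : ℤ, w (-a) = -w a) ∧ (∀ a : ℤ, (n : ℤ) < a → w a = a) ∧
    Even (Nat.card {m : ℤ // 1 ≤ m ∧ m ≤ (n : ℤ) ∧ w m < 0})

/-- The length of `w ∈ W(D_n)`: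
`ℓ(w) = #{1 ≤ a < b ≤ n : i_a > i_b} + #{1 ≤ a < b ≤ n : −i_a > i_b}` where `i_m = w(m)`. -/
noncomputable def len (n : ℕ) (w : Equiv.Perm ℤ) : ℕ :=
  Nat.card {p : ℤ × ℤ // 1 ≤ p.1 ∧ p.1 < p.2 ∧ p.2 ≤ (n : ℤ) ∧ w p.2 < w p.1} +
  Nat.card {p : ℤ × ℤ // 1 ≤ p.1 ∧ p.1 < p.2 ∧ p.2 ≤ (n : ℤ) ∧ w p.2 < -(w p.1)}

/-- The weak order on `W(D_n)`: `u ≤ v` iff `ℓ(u) + ℓ(u⁻¹ v) = ℓ(v)`. -/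
noncomputable def wle (n : ℕ) (u v : Equiv.Perm ℤ) : Prop :=
  IsD n u ∧ IsD n v ∧ len n u + len n (u⁻¹ * v) = len n v

/-- `y` is covered by `x` in the weak order on `W(D_n)`. -/
noncomputable def wcov (n : ℕ) (y x : Equiv.Perm ℤ) : Prop :=
  wle n y x ∧ y ≠ x ∧ ∀ z, wle n y z → wle n z x → z = y ∨ z = x

/-- `x ∈ W(D_n)` is join-irreducible for the weak order: not the minimum (the identity)
and covering exactly one element. -/
noncomputable def JoinIrr (n : ℕ) (x : Equiv.Perm ℤ) : Prop :=
  IsD n x ∧ x ≠ 1 ∧ ∃! y, wcov n y x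

open Finset

-- The simple reflections `s_{-1} = [-2, -1, 3, …, n]` and `s_l` of `W(D_n)`.
def sNeg : Equiv.Perm ℤ := Equiv.swap 1 (-2) * Equiv.swap (-1) 2

def sAdj (l : ℤ) : Equiv.Perm ℤ := Equiv.swap l (l + 1) * Equiv.swap (-l) (-(l + 1))

lemma sNeg_apply (a : ℤ) :
    sNeg a = if a = 1 then -2 else if a = 2 then -1 else if a = -1 then 2
      else if a = -2 then 1 else a := by
  simp only [sNeg, Equiv.Perm.mul_apply, Equiv.swap_apply_def]
  grind

lemma sAdj_apply {l : ℤ} (hl : 1 ≤ l) (a : ℤ) :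
    sAdj l a = if a = l then l + 1 else if a = l + 1 then l else if a = -l then -(l + 1)
      else if a = -(l + 1) then -l else a := by
  simp only [sAdj, Equiv.Perm.mul_apply, Equiv.swap_apply_def]
  grind

lemma sNeg_one : sNeg 1 = -2 := by simp [sNeg_apply]

lemma sNeg_two : sNeg 2 = -1 := by simp [sNeg_apply]

lemma sAdj_self {l : ℤ} (hl : 1 ≤ l) : sAdj l l = l + 1 := by simp [sAdj_apply hl]

lemma sAdj_add_one {l : ℤ} (hl : 1 ≤ l) : sAdj l (l + 1) = l := by simp [sAdj_apply hl]

lemma sNeg_mul_self : sNeg * sNeg = 1 := by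
  ext a
  simp only [Equiv.Perm.mul_apply, Equiv.Perm.one_apply, sNeg_apply]
  grind

lemma sAdj_mul_self {l : ℤ} (hl : 1 ≤ l) : sAdj l * sAdj l = 1 := by
  ext a
  simp only [Equiv.Perm.mul_apply, Equiv.Perm.one_apply, sAdj_apply hl]
  grind

lemma sAdj_sAdj {l : ℤ} (hl : 1 ≤ l) (a : ℤ) : sAdj l (sAdj l a) = a := by
  rw [← Equiv.Perm.mul_apply, sAdj_mul_self hl, Equiv.Perm.one_apply]

lemma sNeg_odd : Function.Odd sNeg := fun a => by
  simp only [sNeg_apply]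
  grind

lemma sAdj_odd {l : ℤ} (hl : 1 ≤ l) : Function.Odd (sAdj l) := fun a => by
  simp only [sAdj_apply hl]
  grind

lemma sNeg_ne_sAdj {l : ℤ} (hl : 1 ≤ l) : sNeg ≠ sAdj l := by
  intro h
  have h1 := congrArg (· 1) h
  simp only [sNeg_apply, sAdj_apply hl] at h1
  grind

lemma sAdj_inj {l m : ℤ} (hl : 1 ≤ l) (hm : 1 ≤ m) : sAdj l = sAdj m ↔ l = m := by
  refine ⟨fun h => ?_, congrArg sAdj⟩
  have hl' := congrArg (· l) h
  simp only [sAdj_apply hl, sAdj_apply hm] at hl'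
  grind

lemma odd_mul {u v : Equiv.Perm ℤ} (hu : Function.Odd u) (hv : Function.Odd v) :
    Function.Odd (u * v) := by
  rw [Equiv.Perm.coe_mul]
  exact hu.comp_odd hv

lemma apply_two_ne_neg_apply_one {w : Equiv.Perm ℤ} (hw : Function.Odd w) : w 2 ≠ -w 1 := by
  intro h
  have := w.injective (h.trans (hw 1).symm)
  omega

lemma card_add_one_of_involutive {α : Type*} [DecidableEq α] {s t : Finset α} {f : α → α}
    {q : α} (hf : Function.Involutive f) (hq : f q = q) (hs : q ∉ s) (ht : q ∈ t)
    (hst : ∀ x, x ≠ q → (x ∈ s ↔ f x ∈ t)) : s.card + 1 = t.card := by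
  have hne : ∀ x, x ≠ q → f x ≠ q := fun x hx h => hx (by rw [← hf x, h, hq])
  have : s.card = (t.erase q).card := by
    refine card_nbij' f f (fun x hx => ?_) (fun y hy => ?_) (fun x _ => hf x) (fun y _ => hf y)
    · have hxq : x ≠ q := fun h => hs (h ▸ hx)
      exact mem_erase.2 ⟨hne x hxq, (hst x hxq).1 hx⟩
    · obtain ⟨hyq, hy⟩ := mem_erase.1 hy
      exact (hst (f y) (hne y hyq)).2 (by rwa [hf y])
  rw [this, card_erase_add_one ht]

section Length

variable {n : ℕ}

noncomputable def inversions (n : ℕ) (w : Equiv.Perm ℤ) : Finset (Bool × ℤ × ℤ) :=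
  (univ ×ˢ (Icc 1 (n : ℤ) ×ˢ Icc 1 (n : ℤ))).filter fun x =>
    x.2.1 < x.2.2 ∧ w x.2.2 < cond x.1 (-w x.2.1) (w x.2.1)

lemma mem_inversions {w : Equiv.Perm ℤ} {t : Bool} {a b : ℤ} :
    (t, a, b) ∈ inversions n w ↔ 1 ≤ a ∧ a < b ∧ b ≤ n ∧ w b < cond t (-w a) (w a) := by
  simp only [inversions, mem_filter, mem_product, mem_univ, mem_Icc, true_and]
  omega

lemma len_eq_card_inversions (n : ℕ) (w : Equiv.Perm ℤ) : len n w = (inversions n w).card := by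
  rw [card_eq_sum_ones, inversions, sum_filter, sum_product, Fintype.sum_bool, len, add_comm]
  congr 1 <;> rw [← sum_filter, ← card_eq_sum_ones] <;>
    exact Nat.subtype_card _ fun p => by
      simp only [mem_filter, mem_product, mem_Icc, cond_true, cond_false]
      omega

lemma len_one (n : ℕ) : len n 1 = 0 := by
  rw [len_eq_card_inversions, card_eq_zero, eq_empty_iff_forall_notMem]
  rintro ⟨t, a, b⟩
  cases t <;> simp only [mem_inversions, Equiv.Perm.one_apply, cond_true, cond_false] <;> omega

/-- Right multiplication by `s_l` maps the inversion `(a, b)` of `w * s_l` to the inversion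
`(s_l a, s_l b)` of `w`, except for `(l, l + 1)`; `(l + 1, l)` is fixed too, to get an
involution. -/
def adjFlip (l : ℤ) (x : Bool × ℤ × ℤ) : Bool × ℤ × ℤ :=
  if (x.2.1 = l ∧ x.2.2 = l + 1) ∨ (x.2.1 = l + 1 ∧ x.2.2 = l) then x
  else (x.1, sAdj l x.2.1, sAdj l x.2.2)

lemma adjFlip_involutive {l : ℤ} (hl : 1 ≤ l) : Function.Involutive (adjFlip l) := by
  rintro ⟨t, a, b⟩
  by_cases hc : (a = l ∧ b = l + 1) ∨ (a = l + 1 ∧ b = l)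
  · simp only [adjFlip, if_pos hc]
  · have hc' : ¬((sAdj l a = l ∧ sAdj l b = l + 1) ∨ (sAdj l a = l + 1 ∧ sAdj l b = l)) := by
      simp only [sAdj_apply hl]
      grind
    simp only [adjFlip, if_neg hc, if_neg hc', sAdj_sAdj hl]

lemma mem_inversions_mul_sAdj {l : ℤ} (hl : 1 ≤ l) (hln : l + 1 ≤ n) (w : Equiv.Perm ℤ)
    {x : Bool × ℤ × ℤ} (hx : x ≠ (false, l, l + 1)) :
    x ∈ inversions n (w * sAdj l) ↔ adjFlip l x ∈ inversions n w := by
  obtain ⟨t, a, b⟩ := x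
  simp only [adjFlip]
  split_ifs with h
  · rcases h with ⟨rfl, rfl⟩ | ⟨rfl, rfl⟩
    · cases t
      · exact absurd rfl hx
      · simp only [mem_inversions, cond_true, Equiv.Perm.mul_apply, sAdj_self hl,
          sAdj_add_one hl]
        omega
    · simp only [mem_inversions]
      omega
  · cases t <;> simp only [mem_inversions, Equiv.Perm.mul_apply, sAdj_apply hl] <;> grind

lemma len_mul_sAdj_add_one {l : ℤ} (hl : 1 ≤ l) (hln : l + 1 ≤ n) {w : Equiv.Perm ℤ}
    (h : w (l + 1) < w l) : len n (w * sAdj l) + 1 = len n w := by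
  rw [len_eq_card_inversions, len_eq_card_inversions]
  refine card_add_one_of_involutive (adjFlip_involutive hl) (by simp [adjFlip]) ?_
    ((mem_inversions (t := false)).2 ⟨hl, by omega, hln, h⟩)
    fun x hx => mem_inversions_mul_sAdj hl hln w hx
  simp only [mem_inversions, cond_false, Equiv.Perm.mul_apply, sAdj_self hl, sAdj_add_one hl]
  omega

lemma len_mul_sAdj_of_lt {l : ℤ} (hl : 1 ≤ l) (hln : l + 1 ≤ n) {w : Equiv.Perm ℤ}
    (h : w l < w (l + 1)) : len n w + 1 = len n (w * sAdj l) := by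
  have := len_mul_sAdj_add_one hl hln (w := w * sAdj l)
    (by rwa [Equiv.Perm.mul_apply, Equiv.Perm.mul_apply, sAdj_self hl, sAdj_add_one hl])
  rwa [mul_assoc, sAdj_mul_self hl, mul_one] at this

/-- Right multiplication by `s_{-1}` turns an inversion `(a, b)` with `a ≤ 2 < b` into the
inversion `(3 - a, b)` of the other kind, and fixes the other inversions except `(true, 1, 2)`. -/
def negFlip (x : Bool × ℤ × ℤ) : Bool × ℤ × ℤ :=
  if 1 ≤ x.2.1 ∧ x.2.1 ≤ 2 ∧ 3 ≤ x.2.2 then (!x.1, 3 - x.2.1, x.2.2) else x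

lemma negFlip_involutive : Function.Involutive negFlip := by
  rintro ⟨t, a, b⟩
  by_cases hc : 1 ≤ a ∧ a ≤ 2 ∧ 3 ≤ b
  · have hc' : 1 ≤ 3 - a ∧ 3 - a ≤ 2 ∧ 3 ≤ b := by omega
    simp only [negFlip, if_pos hc, if_pos hc', Bool.not_not, sub_sub_cancel]
  · simp only [negFlip, if_neg hc]

lemma mem_inversions_mul_sNeg {w : Equiv.Perm ℤ} (hw : Function.Odd w)
    {x : Bool × ℤ × ℤ} (hx : x ≠ (true, 1, 2)) :
    x ∈ inversions n (w * sNeg) ↔ negFlip x ∈ inversions n w := by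
  obtain ⟨t, a, b⟩ := x
  have h1 := hw 1
  have h2 := hw 2
  simp only [negFlip]
  split_ifs <;> cases t <;> simp only [mem_inversions, Equiv.Perm.mul_apply, sNeg_apply] <;> grind

lemma len_mul_sNeg_add_one (hn : 2 ≤ n) {w : Equiv.Perm ℤ} (hw : Function.Odd w)
    (h : w 2 < -w 1) : len n (w * sNeg) + 1 = len n w := by
  rw [len_eq_card_inversions, len_eq_card_inversions]
  refine card_add_one_of_involutive negFlip_involutive (by simp [negFlip]) ?_
    ((mem_inversions (t := true)).2 ⟨le_rfl, one_lt_two, by exact_mod_cast hn, h⟩)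
    fun x hx => mem_inversions_mul_sNeg hw hx
  simp only [mem_inversions, cond_true, Equiv.Perm.mul_apply, sNeg_one, sNeg_two, hw 1, hw 2]
  omega

lemma len_mul_sNeg_of_lt (hn : 2 ≤ n) {w : Equiv.Perm ℤ} (hw : Function.Odd w)
    (h : -w 1 < w 2) : len n w + 1 = len n (w * sNeg) := by
  have := len_mul_sNeg_add_one hn (odd_mul hw sNeg_odd) (w := w * sNeg)
    (by rwa [Equiv.Perm.mul_apply, Equiv.Perm.mul_apply, sNeg_one, sNeg_two, hw, hw, neg_neg])
  rwa [mul_assoc, sNeg_mul_self, mul_one] at this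

end Length

section SignedPerm

variable {n : ℕ} {w : Equiv.Perm ℤ}

lemma apply_ne_zero (hw : Function.Odd w) {a : ℤ} (ha : a ≠ 0) : w a ≠ 0 :=
  fun h => ha (w.injective (h.trans hw.map_zero.symm))

lemma abs_apply_le (hw : Function.Odd w) (hfix : ∀ a, (n : ℤ) < a → w a = a) {a : ℤ}
    (ha : |a| ≤ n) : |w a| ≤ n := by
  by_contra h
  have : w (w a) = w a := by
    rcases lt_or_gt_of_ne (abs_ne_zero.mp (by omega : |w a| ≠ 0)) with hneg | hpos
    · rw [← neg_neg (w a), hw, hfix _ (by rw [abs_of_neg hneg] at h; omega)]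
    · exact hfix _ (by rw [abs_of_pos hpos] at h; omega)
  rw [w.injective this] at h
  omega

lemma odd_inv (hw : Function.Odd w) : Function.Odd ⇑w⁻¹ := fun a => by
  rw [Equiv.Perm.inv_eq_iff_eq, hw, Equiv.Perm.coe_inv, Equiv.apply_symm_apply]

lemma inv_apply_of_lt (hfix : ∀ a, (n : ℤ) < a → w a = a) (a : ℤ) (ha : (n : ℤ) < a) :
    w⁻¹ a = a := by
  rw [Equiv.Perm.inv_eq_iff_eq, hfix a ha]

lemma sign_apply_eq (hw : Function.Odd w) (a : ℤ) :
    Int.sign (w a) = Int.sign (w |a|) * Int.sign a := by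
  rcases lt_trichotomy a 0 with ha | rfl | ha
  · obtain ⟨b, rfl⟩ : ∃ b, a = -b := ⟨-a, (neg_neg a).symm⟩
    rw [hw, abs_neg, abs_of_pos (by omega), Int.sign_neg, Int.sign_neg,
      Int.sign_eq_one_of_pos (by omega : 0 < b)]
    ring
  · simp [hw.map_zero]
  · rw [abs_of_pos ha, Int.sign_eq_one_of_pos ha, mul_one]

lemma prod_comp_abs_apply (hw : Function.Odd w) (hfix : ∀ a, (n : ℤ) < a → w a = a)
    (f : ℤ → ℤ) : ∏ m ∈ Icc 1 (n : ℤ), f |w m| = ∏ k ∈ Icc 1 (n : ℤ), f k := by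
  have hmaps : Set.MapsTo (fun m => |w m|) (Icc 1 (n : ℤ) : Set ℤ) (Icc 1 (n : ℤ)) := by
    intro m hm
    simp only [coe_Icc, Set.mem_Icc] at hm ⊢
    have := abs_apply_le hw hfix (a := m) (by rw [abs_of_pos (by omega)]; omega)
    have := abs_pos.2 (apply_ne_zero hw (a := m) (by omega))
    omega
  have hinj : Set.InjOn (fun m => |w m|) (Icc 1 (n : ℤ) : Set ℤ) := by
    intro a ha b hb hab
    simp only [coe_Icc, Set.mem_Icc] at ha hb
    rcases abs_eq_abs.1 hab with h | h
    · exact w.injective h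
    · have := w.injective (h.trans (hw b).symm)
      omega
  exact prod_nbij _ hmaps hinj (surjOn_of_injOn_of_card_le _ hmaps hinj le_rfl) fun _ _ => rfl

noncomputable def signProd (n : ℕ) (w : Equiv.Perm ℤ) : ℤ := ∏ m ∈ Icc 1 (n : ℤ), Int.sign (w m)

lemma signProd_mul {u v : Equiv.Perm ℤ} (hu : Function.Odd u) (hv : Function.Odd v)
    (hvfix : ∀ a, (n : ℤ) < a → v a = a) :
    signProd n (u * v) = signProd n u * signProd n v := by
  simp only [signProd, Equiv.Perm.mul_apply, sign_apply_eq hu (v _), prod_mul_distrib,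
    prod_comp_abs_apply hv hvfix (fun k => Int.sign (u k))]

lemma signProd_eq_neg_one_pow (hw : Function.Odd w) :
    signProd n w = (-1) ^ ((Icc 1 (n : ℤ)).filter (w · < 0)).card := by
  rw [signProd, ← prod_filter_mul_prod_filter_not _ (w · < 0),
    prod_congr rfl fun m hm => Int.sign_eq_neg_one_of_neg (mem_filter.1 hm).2, prod_const,
    prod_congr rfl fun m hm => Int.sign_eq_one_of_pos ?_, prod_const_one, mul_one]
  obtain ⟨hm, hneg⟩ := mem_filter.1 hm
  have := apply_ne_zero hw (a := m) (by rw [mem_Icc] at hm; omega)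
  omega

lemma isD_iff :
    IsD n w ↔ Function.Odd w ∧ (∀ a, (n : ℤ) < a → w a = a) ∧ signProd n w = 1 := by
  refine and_congr_right fun hw => and_congr_right fun _ => ?_
  rw [signProd_eq_neg_one_pow hw, neg_one_pow_eq_one_iff_even (by norm_num),
    Nat.subtype_card ((Icc 1 (n : ℤ)).filter (w · < 0)) fun m => by
      simp only [mem_filter, mem_Icc]; omega]

end SignedPerm

lemma isD_one (n : ℕ) : IsD n 1 := by
  refine ⟨fun a => rfl, fun a _ => rfl, ?_⟩
  rw [Nat.subtype_card ∅ fun m => by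
    simp only [notMem_empty, false_iff, Equiv.Perm.one_apply]; omega]
  decide

lemma IsD.mul {n : ℕ} {u v : Equiv.Perm ℤ} (hu : IsD n u) (hv : IsD n v) : IsD n (u * v) := by
  rw [isD_iff] at hu hv ⊢
  refine ⟨odd_mul hu.1 hv.1, fun a ha => by rw [Equiv.Perm.mul_apply, hv.2.1 a ha, hu.2.1 a ha],
    ?_⟩
  rw [signProd_mul hu.1 hv.1 hv.2.1, hu.2.2, hv.2.2, one_mul]

lemma IsD.inv {n : ℕ} {w : Equiv.Perm ℤ} (hw : IsD n w) : IsD n w⁻¹ := by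
  have h1 := isD_iff.1 (isD_one n)
  rw [isD_iff] at hw ⊢
  refine ⟨odd_inv hw.1, inv_apply_of_lt hw.2.1, ?_⟩
  have := signProd_mul (n := n) (odd_inv hw.1) hw.1 hw.2.1
  rwa [inv_mul_cancel, h1.2.2, hw.2.2, mul_one, eq_comm] at this

lemma add_sub_le_of_forall_lt_add_one {f : ℤ → ℤ} {a b : ℤ} (hab : a ≤ b)
    (hf : ∀ l, a ≤ l → l < b → f l < f (l + 1)) : f a + (b - a) ≤ f b := by
  induction b, hab using Int.leInduction with
  | base => simp
  | succ c hac ih =>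
    have := ih fun l h1 h2 => hf l h1 (by omega)
    have := hf c hac (by omega)
    omega

lemma eq_one_of_eqOn_Icc {n : ℕ} {w : Equiv.Perm ℤ} (hw : Function.Odd w)
    (hfix : ∀ a, (n : ℤ) < a → w a = a) (h : ∀ m, 1 ≤ m → m ≤ (n : ℤ) → w m = m) : w = 1 := by
  have hnonneg : ∀ a, 0 ≤ a → w a = a := fun a ha => by
    rcases ha.eq_or_lt with rfl | ha
    · exact hw.map_zero
    · exact (le_or_gt a n).elim (h a ha) (hfix a)
  ext a
  rcases le_or_gt 0 a with ha | ha
  · exact hnonneg a ha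
  · rw [Equiv.Perm.one_apply, ← neg_neg a, hw, hnonneg (-a) (by omega)]

lemma eq_one_of_no_descent {n : ℕ} {u : Equiv.Perm ℤ} (hu : IsD n u) (h0 : -u 1 < u 2)
    (hasc : ∀ l, 1 ≤ l → l + 1 ≤ (n : ℤ) → u l < u (l + 1)) : u = 1 := by
  obtain ⟨hodd, hfix, heven⟩ := hu
  have hincr : ∀ a b, 1 ≤ a → a ≤ b → b ≤ (n : ℤ) → u a + (b - a) ≤ u b := fun a b ha hab hb =>
    add_sub_le_of_forall_lt_add_one hab fun l h1 h2 => hasc l (by omega) (by omega)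
  have hpos : ∀ m, 2 ≤ m → m ≤ (n : ℤ) → 0 < u m := fun m hm hmn => by
    have : u 1 < u 2 := hasc 1 le_rfl (by omega)
    have := hincr 2 m (by omega) hm hmn
    omega
  -- otherwise `1` would be the only sign change
  have hpos1 : (1 : ℤ) ≤ n → 0 < u 1 := fun hn => by
    by_contra h1
    have : u 1 < 0 := lt_of_le_of_ne (not_lt.1 h1) (apply_ne_zero hodd one_ne_zero)
    rw [Nat.subtype_card {1} fun m => by
      rw [mem_singleton]
      constructor
      · rintro rfl
        omega
      · rintro ⟨hm, hmn, hneg⟩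
        by_contra hm1
        have := hpos m (by omega) hmn
        omega] at heven
    exact Nat.not_even_one heven
  refine eq_one_of_eqOn_Icc hodd hfix fun m hm hmn => ?_
  have hlow := hincr 1 m le_rfl hm hmn
  have hup := hincr m n hm hmn le_rfl
  have hn := (le_abs_self (u n)).trans (abs_apply_le hodd hfix (a := n) (by simp))
  have := hpos1 (by omega)
  omega

def IsSimpleRefl (n : ℕ) (s : Equiv.Perm ℤ) : Prop :=
  s = sNeg ∨ ∃ l : ℤ, 1 ≤ l ∧ l + 1 ≤ n ∧ s = sAdj l

def IsRightDescent (n : ℕ) (w s : Equiv.Perm ℤ) : Prop :=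
  IsSimpleRefl n s ∧ len n (w * s) < len n w

section Descents

variable {n : ℕ}

lemma IsSimpleRefl.mul_self {s : Equiv.Perm ℤ} (hs : IsSimpleRefl n s) : s * s = 1 := by
  rcases hs with rfl | ⟨l, hl, -, rfl⟩
  exacts [sNeg_mul_self, sAdj_mul_self hl]

lemma IsSimpleRefl.isD (hn : 2 ≤ n) {s : Equiv.Perm ℤ} (hs : IsSimpleRefl n s) : IsD n s := by
  rcases hs with rfl | ⟨l, hl, hln, rfl⟩
  · refine ⟨sNeg_odd, fun a ha => by rw [sNeg_apply]; grind, ?_⟩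
    rw [Nat.subtype_card {1, 2} fun m => by simp only [sNeg_apply]; grind]
    decide
  · refine ⟨sAdj_odd hl, fun a ha => by rw [sAdj_apply hl]; grind, ?_⟩
    rw [Nat.subtype_card ∅ fun m => by simp only [sAdj_apply hl]; grind]
    decide

lemma IsSimpleRefl.len_mul (hn : 2 ≤ n) {s w : Equiv.Perm ℤ} (hs : IsSimpleRefl n s)
    (hw : Function.Odd w) : len n (w * s) + 1 = len n w ∨ len n w + 1 = len n (w * s) := by
  rcases hs with rfl | ⟨l, hl, hln, rfl⟩
  · rcases (apply_two_ne_neg_apply_one hw).lt_or_gt with h | h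
    exacts [.inl (len_mul_sNeg_add_one hn hw h), .inr (len_mul_sNeg_of_lt hn hw h)]
  · rcases (w.injective.ne (a₁ := l + 1) (a₂ := l) (by omega)).lt_or_gt with h | h
    exacts [.inl (len_mul_sAdj_add_one hl hln h), .inr (len_mul_sAdj_of_lt hl hln h)]

lemma IsSimpleRefl.len_eq_one (hn : 2 ≤ n) {s : Equiv.Perm ℤ} (hs : IsSimpleRefl n s) :
    len n s = 1 := by
  have := hs.len_mul hn (w := 1) fun _ => rfl
  rw [one_mul, len_one] at this
  omega

lemma isRightDescent_sNeg_iff (hn : 2 ≤ n) {w : Equiv.Perm ℤ} (hw : Function.Odd w) :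
    IsRightDescent n w sNeg ↔ w 2 < -w 1 := by
  refine ⟨fun ⟨_, h⟩ => ?_, fun h => ⟨.inl rfl, by have := len_mul_sNeg_add_one hn hw h; omega⟩⟩
  by_contra h'
  have := len_mul_sNeg_of_lt hn hw
    (lt_of_le_of_ne (not_lt.1 h') (apply_two_ne_neg_apply_one hw).symm)
  omega

lemma isRightDescent_sAdj_iff {l : ℤ} (hl : 1 ≤ l) (hln : l + 1 ≤ n) {w : Equiv.Perm ℤ} :
    IsRightDescent n w (sAdj l) ↔ w (l + 1) < w l := by
  refine ⟨fun ⟨_, h⟩ => ?_,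
    fun h => ⟨.inr ⟨l, hl, hln, rfl⟩, by have := len_mul_sAdj_add_one hl hln h; omega⟩⟩
  by_contra h'
  have := len_mul_sAdj_of_lt hl hln (lt_of_le_of_ne (not_lt.1 h') (w.injective.ne (by omega)))
  omega

lemma exists_isRightDescent_of_ne_one (hn : 2 ≤ n) {u : Equiv.Perm ℤ} (hu : IsD n u)
    (h : u ≠ 1) : ∃ s, IsRightDescent n u s := by
  by_contra! hno
  refine h (eq_one_of_no_descent hu ?_ fun l hl hln => ?_)
  · have := (isRightDescent_sNeg_iff hn hu.1).not.1 (hno sNeg)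
    exact lt_of_le_of_ne (not_lt.1 this) (apply_two_ne_neg_apply_one hu.1).symm
  · have := (isRightDescent_sAdj_iff hl hln).not.1 (hno (sAdj l))
    exact lt_of_le_of_ne (not_lt.1 this) (u.injective.ne (by omega))

lemma eq_one_of_len_eq_zero (hn : 2 ≤ n) {u : Equiv.Perm ℤ} (hu : IsD n u)
    (h : len n u = 0) : u = 1 := by
  by_contra hne
  obtain ⟨s, -, hlt⟩ := exists_isRightDescent_of_ne_one hn hu hne
  omega

lemma len_mul_le (hn : 2 ≤ n) {a b : Equiv.Perm ℤ} (ha : Function.Odd a) (hb : IsD n b) :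
    len n (a * b) ≤ len n a + len n b := by
  induction hk : len n b using Nat.strong_induction_on generalizing b with
  | _ k ih =>
  by_cases hb1 : b = 1
  · simp [hb1]
  obtain ⟨s, hs, hlt⟩ := exists_isRightDescent_of_ne_one hn hb hb1
  have hbs := hs.len_mul hn hb.1
  have hsub := ih (len n (b * s)) (by omega) (hb.mul (hs.isD hn)) rfl
  have has := hs.len_mul hn (odd_mul ha (odd_mul hb.1 (hs.isD hn).1))
  rw [show a * b = a * (b * s) * s by rw [mul_assoc, mul_assoc, hs.mul_self, mul_one]]
  omega

lemma wcov_mul_of_isRightDescent (hn : 2 ≤ n) {x s : Equiv.Perm ℤ} (hx : IsD n x)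
    (hd : IsRightDescent n x s) : wcov n (x * s) x := by
  obtain ⟨hs, hlt⟩ := hd
  have hstep := hs.len_mul hn hx.1
  have hxs : IsD n (x * s) := hx.mul (hs.isD hn)
  have hinv : (x * s)⁻¹ * x = s := by
    rw [mul_inv_rev, mul_assoc, inv_mul_cancel, mul_one, inv_eq_of_mul_eq_one_left hs.mul_self]
  refine ⟨⟨hxs, hx, by rw [hinv, hs.len_eq_one hn]; omega⟩, fun h => by rw [h] at hlt; omega,
    fun z ⟨_, hz, hxz⟩ ⟨_, _, hzx⟩ => ?_⟩
  rcases (by omega : len n ((x * s)⁻¹ * z) = 0 ∨ len n (z⁻¹ * x) = 0) with h | h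
  · exact .inl (inv_mul_eq_one.1 (eq_one_of_len_eq_zero hn (hxs.inv.mul hz) h)).symm
  · exact .inr (inv_mul_eq_one.1 (eq_one_of_len_eq_zero hn (hz.inv.mul hx) h))

lemma exists_isRightDescent_of_wcov (hn : 2 ≤ n) {x y : Equiv.Perm ℤ} (hx : IsD n x)
    (h : wcov n y x) : ∃ s, IsRightDescent n x s ∧ y = x * s := by
  obtain ⟨⟨hy, -, hlen⟩, hne, hcov⟩ := h
  have hu : IsD n (y⁻¹ * x) := hy.inv.mul hx
  obtain ⟨s, hs, hlt⟩ :=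
    exists_isRightDescent_of_ne_one hn hu fun h => hne (inv_mul_eq_one.1 h)
  have hus := hs.len_mul hn hu.1
  have hxs := hs.len_mul hn hx.1
  have hsub : len n (x * s) ≤ len n y + len n (y⁻¹ * x * s) :=
    calc len n (x * s) = len n (y * (y⁻¹ * x * s)) := by rw [mul_assoc, mul_inv_cancel_left]
      _ ≤ _ := len_mul_le hn hy.1 (hu.mul (hs.isD hn))
  have hd : IsRightDescent n x s := ⟨hs, by omega⟩
  have hyxs : wle n y (x * s) := ⟨hy, hx.mul (hs.isD hn), by rw [← mul_assoc]; omega⟩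
  rcases hcov _ hyxs (wcov_mul_of_isRightDescent hn hx hd).1 with h | h
  · exact ⟨s, hd, h.symm⟩
  · rw [h] at hxs
    omega

lemma wcov_iff (hn : 2 ≤ n) {x y : Equiv.Perm ℤ} (hx : IsD n x) :
    wcov n y x ↔ ∃ s, IsRightDescent n x s ∧ y = x * s :=
  ⟨exists_isRightDescent_of_wcov hn hx, fun ⟨_, hd, hy⟩ => hy ▸ wcov_mul_of_isRightDescent hn hx hd⟩

lemma joinIrr_iff (hn : 2 ≤ n) {x : Equiv.Perm ℤ} (hx : IsD n x) :
    JoinIrr n x ↔ ∃! s, IsRightDescent n x s := by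
  constructor
  · rintro ⟨-, -, y, hy, huniq⟩
    obtain ⟨s, hs, rfl⟩ := (wcov_iff hn hx).1 hy
    exact ⟨s, hs, fun t ht => mul_left_cancel (huniq _ ((wcov_iff hn hx).2 ⟨t, ht, rfl⟩))⟩
  · rintro ⟨s, hs, huniq⟩
    refine ⟨hx, fun h => ?_, x * s, (wcov_iff hn hx).2 ⟨s, hs, rfl⟩, fun y hy => ?_⟩
    · have := hs.2
      rw [h, len_one] at this
      omega
    · obtain ⟨t, ht, rfl⟩ := (wcov_iff hn hx).1 hy
      rw [huniq t ht]

lemma existsUnique_isRightDescent_iff (hn : 2 ≤ n) {x : Equiv.Perm ℤ}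
    (hx : Function.Odd x) :
    (∃! s, IsRightDescent n x s) ↔
      ((∀ m : ℤ, 1 ≤ m → m < (n : ℤ) → x m < x (m + 1)) ∧ x 2 < -(x 1)) ∨
      (∃ l : ℤ, 1 ≤ l ∧ l ≤ (n : ℤ) - 1 ∧ x (l + 1) < x l ∧
        (∀ m : ℤ, 1 ≤ m → m < (n : ℤ) → m ≠ l → x m < x (m + 1)) ∧ -(x 1) < x 2) := by
  have hdesc0 := isRightDescent_sNeg_iff hn hx
  have hasc0 : ¬IsRightDescent n x sNeg → -(x 1) < x 2 := fun h =>
    lt_of_le_of_ne (not_lt.1 (hdesc0.not.1 h)) (apply_two_ne_neg_apply_one hx).symm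
  have hasc : ∀ m, 1 ≤ m → m < (n : ℤ) → ¬IsRightDescent n x (sAdj m) → x m < x (m + 1) :=
    fun m hm hmn h => lt_of_le_of_ne (not_lt.1 ((isRightDescent_sAdj_iff hm (by omega)).not.1 h))
      (x.injective.ne (by omega))
  constructor
  · rintro ⟨s, hs, huniq⟩
    rcases hs.1 with rfl | ⟨l, hl, hln, rfl⟩
    · exact .inl ⟨fun m hm hmn => hasc m hm hmn fun hd => sNeg_ne_sAdj hm (huniq _ hd).symm,
        hdesc0.1 hs⟩
    · exact .inr ⟨l, hl, by omega, (isRightDescent_sAdj_iff hl hln).1 hs,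
        fun m hm hmn hml => hasc m hm hmn fun hd => hml ((sAdj_inj hm hl).1 (huniq _ hd)),
        hasc0 fun hd => sNeg_ne_sAdj hl (huniq _ hd)⟩
  · rintro (⟨hinc, h0⟩ | ⟨l, hl, hln, hd, hinc, h0⟩)
    · refine ⟨sNeg, hdesc0.2 h0, fun t ht => ?_⟩
      rcases ht.1 with rfl | ⟨m, hm, hmn, rfl⟩
      · rfl
      · exact absurd ((isRightDescent_sAdj_iff hm hmn).1 ht) (hinc m hm (by omega)).asymm
    · refine ⟨sAdj l, (isRightDescent_sAdj_iff hl (by omega)).2 hd, fun t ht => ?_⟩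
      rcases ht.1 with rfl | ⟨m, hm, hmn, rfl⟩
      · exact absurd (hdesc0.1 ht) h0.asymm
      · by_contra hml
        exact absurd ((isRightDescent_sAdj_iff hm hmn).1 ht)
          (hinc m hm (by omega) fun h => hml (h ▸ rfl)).asymm

end Descents

/-- For `w = [i_1, …, i_n] ∈ W(D_n)` (so `i_m = w(m)`), `w` is
join-irreducible in the weak order iff either (i) `i_1 < ⋯ < i_n` and `−i_1 > i_2`, or
(ii) there is `ℓ ∈ {1, …, n−1}` with `i_1 < ⋯ < i_ℓ > i_{ℓ+1} < ⋯ < i_n` and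
`−i_1 < i_2`. -/
theorem stmt16 (n : ℕ) (hn : 4 ≤ n) (w : Equiv.Perm ℤ) (hw : IsD n w) :
    JoinIrr n w ↔
      ((∀ m : ℤ, 1 ≤ m → m < (n : ℤ) → w m < w (m + 1)) ∧ w 2 < -(w 1)) ∨
      (∃ l : ℤ, 1 ≤ l ∧ l ≤ (n : ℤ) - 1 ∧ w (l + 1) < w l ∧
        (∀ m : ℤ, 1 ≤ m → m < (n : ℤ) → m ≠ l → w m < w (m + 1)) ∧ -(w 1) < w 2) := by
  rw [joinIrr_iff (by omega) hw, existsUnique_isRightDescent_iff (by omega) hw.1]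

end Stmt16
end
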